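/- arXiv:2011.10153 — 6 statements merged into one kernel-verified Lean document; each statement's English description precedes it below -/
import Mathlib

section
/- For every measurable A ⊆ Ω and all integers q ≥ 1 and r ≥ q + 2, one has | μ(𝒲ᶜ_{r}(A)) − r·μ(A^{(q)}) | ≤ 2q·μ(A) + r·μ(A^{(q)} ∩ 𝒲ᶜ_{[q+1, r)}(A)). -/
open MeasureTheory Set Filter

/-- `𝒲_J(A) = ⋂_{k ∈ J} σ^{-k}(Aᶜ)`: no occurrence of `A` at times in `J`. -/
def Wset {Ω : Type*} (σ : Ω → Ω) (J : Set ℕ) (A : Set Ω) : Set Ω :=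
  ⋂ k ∈ J, (σ^[k]) ⁻¹' Aᶜ

/-- The annulus `A^{(q)} = A ∩ σ^{-1}(Aᶜ) ∩ ⋯ ∩ σ^{-q}(Aᶜ)`, with `A^{(0)} = A`. -/
def ann {Ω : Type*} (σ : Ω → Ω) (A : Set Ω) (q : ℕ) : Set Ω :=
  A ∩ ⋂ i ∈ Set.Icc 1 q, (σ^[i]) ⁻¹' Aᶜ

section aux

variable {Ω : Type*} [MeasurableSpace Ω]

lemma mem_ann_iff {σ : Ω → Ω} {A : Set Ω} {m : ℕ} {x : Ω} :
    x ∈ ann σ A m ↔ x ∈ A ∧ ∀ i, 1 ≤ i → i ≤ m → σ^[i] x ∉ A := by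
  simp [ann, Set.mem_Icc, and_imp]

lemma measurableSet_ann {σ : Ω → Ω} (hσ : Measurable σ) {A : Set Ω} (hA : MeasurableSet A)
    (m : ℕ) : MeasurableSet (ann σ A m) :=
  hA.inter (MeasurableSet.biInter (Set.to_countable _) fun i _ => (hσ.iterate i) hA.compl)

lemma measurableSet_Wset {σ : Ω → Ω} (hσ : Measurable σ) {A : Set Ω} (hA : MeasurableSet A)
    (J : Set ℕ) : MeasurableSet (Wset σ J A) :=
  MeasurableSet.biInter (Set.to_countable _) fun k _ => (hσ.iterate k) hA.compl

lemma ann_antitone {σ : Ω → Ω} {A : Set Ω} {m n : ℕ} (h : m ≤ n) :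
    ann σ A n ⊆ ann σ A m := by
  intro x hx
  rw [mem_ann_iff] at hx ⊢
  exact ⟨hx.1, fun i h1 h2 => hx.2 i h1 (h2.trans h)⟩

/-- Decomposition of `(𝒲_r)ᶜ` by the last visit time. -/
lemma Wset_compl_eq_biUnion (σ : Ω → Ω) (A : Set Ω) (r : ℕ) :
    (Wset σ (Set.Ico 0 r) A)ᶜ =
      ⋃ k ∈ Finset.range r, (σ^[k]) ⁻¹' (ann σ A (r - 1 - k)) := by
  ext x
  simp only [Wset, Set.mem_compl_iff, Set.mem_iInter, Set.mem_Ico, Set.mem_iUnion,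
    Set.mem_preimage, Finset.mem_range]
  constructor
  · intro h
    push_neg at h
    obtain ⟨k, ⟨-, hkr⟩, hk⟩ := h
    classical
    set P : ℕ → Prop := fun j => σ^[j] x ∈ A with hP
    set K := Nat.findGreatest P (r - 1) with hK
    have hkr1 : k ≤ r - 1 := by omega
    have hPK : P K := Nat.findGreatest_spec hkr1 hk
    have hKle : K ≤ r - 1 := Nat.findGreatest_le _
    refine ⟨K, by omega, ?_⟩
    rw [mem_ann_iff]
    refine ⟨hPK, fun i h1 h2 => ?_⟩
    have hng : ¬ P (K + i) :=
      Nat.findGreatest_is_greatest (n := r - 1) (P := P) (by omega) (by omega)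
    show σ^[i] (σ^[K] x) ∉ A
    rw [← Function.iterate_add_apply, Nat.add_comm]
    exact hng
  · intro ⟨k, hkr, hk⟩
    rw [mem_ann_iff] at hk
    push_neg
    exact ⟨k, ⟨Nat.zero_le _, hkr⟩, by simpa using hk.1⟩

lemma pairwise_disjoint_decomp (σ : Ω → Ω) (A : Set Ω) (r : ℕ) :
    (↑(Finset.range r) : Set ℕ).PairwiseDisjoint
      (fun k => (σ^[k]) ⁻¹' (ann σ A (r - 1 - k))) := by
  have main : ∀ k k', k < k' → k' < r →
      Disjoint ((σ^[k]) ⁻¹' (ann σ A (r - 1 - k))) ((σ^[k']) ⁻¹' (ann σ A (r - 1 - k'))) := by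
    intro k k' h hk'r
    refine Set.disjoint_left.mpr fun x hx hx' => ?_
    rw [Set.mem_preimage, mem_ann_iff] at hx hx'
    have h1 : σ^[k' - k] (σ^[k] x) ∉ A := hx.2 (k' - k) (by omega) (by omega)
    rw [← Function.iterate_add_apply] at h1
    have heq : k' - k + k = k' := by omega
    rw [heq] at h1
    exact h1 hx'.1
  intro k hk k' hk' hne
  simp only [Finset.coe_range, Set.mem_Iio] at hk hk'
  rcases hne.lt_or_gt with h | h
  · exact main k k' h hk'
  · exact (main k' k h hk).symm

lemma measure_Wset_compl (μ : Measure Ω) (σ : Ω → Ω) (hσ : MeasurePreserving σ μ μ)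
    {A : Set Ω} (hA : MeasurableSet A) (r : ℕ) :
    μ ((Wset σ (Set.Ico 0 r) A)ᶜ) = ∑ m ∈ Finset.range r, μ (ann σ A m) := by
  rw [Wset_compl_eq_biUnion,
    measure_biUnion_finset (pairwise_disjoint_decomp σ A r)
      (fun k _ => (hσ.measurable.iterate k) (measurableSet_ann hσ.measurable hA _))]
  have : ∀ k ∈ Finset.range r, μ ((σ^[k]) ⁻¹' (ann σ A (r - 1 - k))) = μ (ann σ A (r - 1 - k)) :=
    fun k _ => (hσ.iterate k).measure_preimage
      (measurableSet_ann hσ.measurable hA _).nullMeasurableSet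
  rw [Finset.sum_congr rfl this]
  exact Finset.sum_range_reflect (fun m => μ (ann σ A m)) r

end aux

/-- For every measurable `A` and integers `q ≥ 1`, `r ≥ q + 2`:
`|μ(𝒲ᶜ_r(A)) − r·μ(A^{(q)})| ≤ 2q·μ(A) + r·μ(A^{(q)} ∩ 𝒲ᶜ_{[q+1,r)}(A))`. -/
theorem stmt2 {Ω : Type*} [MeasurableSpace Ω] (μ : Measure Ω) [IsProbabilityMeasure μ]
    (σ : Ω → Ω) (hσ : MeasurePreserving σ μ μ)
    (A : Set Ω) (hA : MeasurableSet A) (q r : ℕ) (hq : 1 ≤ q) (hr : q + 2 ≤ r) :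
    |(μ ((Wset σ (Set.Ico 0 r) A)ᶜ)).toReal - (r : ℝ) * (μ (ann σ A q)).toReal| ≤
      2 * (q : ℝ) * (μ A).toReal +
        (r : ℝ) * (μ (ann σ A q ∩ (Wset σ (Set.Ico (q + 1) r) A)ᶜ)).toReal := by
  set a : ℕ → ℝ := fun m => (μ (ann σ A m)).toReal with ha
  set ε : ℝ := (μ (ann σ A q ∩ (Wset σ (Set.Ico (q + 1) r) A)ᶜ)).toReal with hε
  have hεnn : 0 ≤ ε := ENNReal.toReal_nonneg
  have hAnn : 0 ≤ (μ A).toReal := ENNReal.toReal_nonneg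
  -- the sum formula
  have hsum : (μ ((Wset σ (Set.Ico 0 r) A)ᶜ)).toReal = ∑ m ∈ Finset.range r, a m := by
    rw [measure_Wset_compl μ σ hσ hA r, ENNReal.toReal_sum]
    exact fun m _ => measure_ne_top μ _
  -- bounds on individual terms
  have hterm : ∀ m ∈ Finset.range r, |a m - a q| ≤ if m < q then (μ A).toReal else ε := by
    intro m hm
    rw [Finset.mem_range] at hm
    by_cases hmq : m < q
    · rw [if_pos hmq]
      have h1 : a q ≤ a m :=
        ENNReal.toReal_mono (measure_ne_top μ _) (measure_mono (ann_antitone hmq.le))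
      have h2 : a m ≤ (μ A).toReal :=
        ENNReal.toReal_mono (measure_ne_top μ _) (measure_mono (Set.inter_subset_left))
      rw [abs_of_nonneg (by linarith)]
      have : 0 ≤ a q := ENNReal.toReal_nonneg
      linarith
    · rw [if_neg hmq]
      push_neg at hmq
      have h1 : a m ≤ a q :=
        ENNReal.toReal_mono (measure_ne_top μ _) (measure_mono (ann_antitone hmq))
      -- ann q ⊆ ann m ∪ (ann q ∩ Wᶜ)
      have hsub : ann σ A q ⊆ ann σ A m ∪ (ann σ A q ∩ (Wset σ (Set.Ico (q + 1) r) A)ᶜ) := by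
        intro x hx
        by_cases hxm : x ∈ ann σ A m
        · exact Or.inl hxm
        · refine Or.inr ⟨hx, ?_⟩
          rw [mem_ann_iff] at hx hxm
          push_neg at hxm
          obtain ⟨i, h1i, him, hiA⟩ := hxm hx.1
          simp only [Wset, Set.mem_compl_iff, Set.mem_iInter, Set.mem_Ico]
          push_neg
          have hiq : q + 1 ≤ i := by
            by_contra hc
            exact (hx.2 i h1i (by omega)) hiA
          exact ⟨i, ⟨hiq, by omega⟩, by simpa using hiA⟩
      have h2 : a q ≤ a m + ε := by
        have := measure_mono (μ := μ) hsub
        have hle := this.trans (measure_union_le _ _)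
        calc a q ≤ (μ (ann σ A m) + μ (ann σ A q ∩ (Wset σ (Set.Ico (q + 1) r) A)ᶜ)).toReal :=
              ENNReal.toReal_mono (by finiteness) hle
          _ = a m + ε := ENNReal.toReal_add (measure_ne_top μ _) (measure_ne_top μ _)
      rw [abs_sub_comm, abs_of_nonneg (by linarith)]
      linarith
  -- assemble
  have hqr : q ≤ r := by omega
  have key : |(∑ m ∈ Finset.range r, a m) - (r : ℝ) * a q| ≤
      (q : ℝ) * (μ A).toReal + ((r : ℝ) - q) * ε := by
    have h0 : (∑ m ∈ Finset.range r, a m) - (r : ℝ) * a q =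
        ∑ m ∈ Finset.range r, (a m - a q) := by
      rw [Finset.sum_sub_distrib, Finset.sum_const, Finset.card_range, nsmul_eq_mul]
    rw [h0]
    calc |∑ m ∈ Finset.range r, (a m - a q)| ≤ ∑ m ∈ Finset.range r, |a m - a q| :=
          Finset.abs_sum_le_sum_abs _ _
      _ ≤ ∑ m ∈ Finset.range r, (if m < q then (μ A).toReal else ε) :=
          Finset.sum_le_sum hterm
      _ = (q : ℝ) * (μ A).toReal + ((r : ℝ) - q) * ε := by
          rw [Finset.range_eq_Ico, ← Finset.sum_Ico_consecutive _ (Nat.zero_le q) hqr]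
          rw [Finset.sum_congr rfl (fun m hm => if_pos (Finset.mem_Ico.mp hm).2),
            Finset.sum_congr (g := fun _ => ε) rfl
              (fun m hm => if_neg (by simpa using (Finset.mem_Ico.mp hm).1.not_gt)),
            Finset.sum_const, Finset.sum_const, Nat.card_Ico, Nat.card_Ico,
            nsmul_eq_mul, nsmul_eq_mul]
          push_cast [Nat.cast_sub hqr, Nat.sub_zero]
          ring
  rw [hsum]
  have h2q : (q : ℝ) * (μ A).toReal ≤ 2 * (q : ℝ) * (μ A).toReal := by
    have : (0:ℝ) ≤ (q : ℝ) := Nat.cast_nonneg q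
    nlinarith
  have h2r : ((r : ℝ) - q) * ε ≤ (r : ℝ) * ε := by
    have : (0:ℝ) ≤ (q : ℝ) := Nat.cast_nonneg q
    nlinarith
  linarith
end

section
/- Let m ≥ 1, let A_1, …, A_m ⊆ Ω be measurable, let q ≥ 0 be an integer, and let J_1, …, J_m be integer intervals J_ℓ = [c_ℓ, d_ℓ) ∩ ℕ₀ with c_1 ≤ d_1 ≤ c_2 ≤ d_2 ≤ ⋯ ≤ c_m ≤ d_m (ordered and pairwise disjoint). Then | μ( ⋂_{ℓ=1}^m 𝒲_{J_ℓ}(A_ℓ^{(q)}) ) − μ( ⋂_{ℓ=1}^m 𝒲_{J_ℓ}(A_ℓ) ) | ≤ q·Σ_{ℓ=1}^m μ(A_ℓ). -/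
open MeasureTheory Set Filter
open scoped ENNReal

/-- For `m ≥ 1` measurable sets `A_1, …, A_m`, an integer `q ≥ 0`, and ordered pairwise
disjoint integer intervals `J_ℓ = [c_ℓ, d_ℓ)`:
`|μ(⋂_ℓ 𝒲_{J_ℓ}(A_ℓ^{(q)})) − μ(⋂_ℓ 𝒲_{J_ℓ}(A_ℓ))| ≤ q·Σ_ℓ μ(A_ℓ)`. -/
theorem stmt5 {Ω : Type*} [MeasurableSpace Ω] (μ : Measure Ω) [IsProbabilityMeasure μ]
    (σ : Ω → Ω) (hσ : MeasurePreserving σ μ μ)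
    (m : ℕ) (hm : 1 ≤ m) (A : Fin m → Set Ω) (hA : ∀ ℓ, MeasurableSet (A ℓ))
    (q : ℕ) (c d : Fin m → ℕ)
    (hcd : ∀ ℓ, c ℓ ≤ d ℓ) (hord : ∀ i j : Fin m, i < j → d i ≤ c j) :
    |(μ (⋂ ℓ, Wset σ (Set.Ico (c ℓ) (d ℓ)) (ann σ (A ℓ) q))).toReal -
        (μ (⋂ ℓ, Wset σ (Set.Ico (c ℓ) (d ℓ)) (A ℓ))).toReal| ≤
      (q : ℝ) * ∑ ℓ, (μ (A ℓ)).toReal := by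
  classical
  set W' := ⋂ ℓ, Wset σ (Set.Ico (c ℓ) (d ℓ)) (ann σ (A ℓ) q) with hW'def
  set W := ⋂ ℓ, Wset σ (Set.Ico (c ℓ) (d ℓ)) (A ℓ) with hWdef
  have hsub : W ⊆ W' := by
    refine Set.iInter_mono fun ℓ => Set.iInter₂_mono fun k hk => ?_
    exact Set.preimage_mono (Set.compl_subset_compl.2 Set.inter_subset_left)
  have hmeasW : MeasurableSet W := by
    refine MeasurableSet.iInter fun ℓ => MeasurableSet.iInter fun k =>
      MeasurableSet.iInter fun _ => ?_
    exact (hσ.measurable.iterate k) (hA ℓ).compl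
  -- cover the difference
  have hdiff : W' \ W ⊆ ⋃ ℓ, ⋃ i ∈ Finset.Icc 1 q, (σ^[d ℓ - 1 + i]) ⁻¹' (A ℓ) := by
    rintro x ⟨hx', hxn⟩
    simp only [hWdef, Set.mem_iInter, Wset, Set.mem_preimage, Set.mem_compl_iff,
      Set.mem_Ico, not_forall] at hxn
    obtain ⟨ℓ, hℓ⟩ := hxn
    push_neg at hℓ
    obtain ⟨k0, hk0, hk0A⟩ := hℓ
    -- the finset of hitting times in J_ℓ
    set S : Finset ℕ := (Finset.Ico (c ℓ) (d ℓ)).filter (fun k => σ^[k] x ∈ A ℓ) with hS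
    have hSne : S.Nonempty := ⟨k0, by simp [hS, Finset.mem_filter, Finset.mem_Ico, hk0.1, hk0.2, hk0A]⟩
    set k := S.max' hSne with hk
    have hkS : k ∈ S := S.max'_mem hSne
    have hkIco : c ℓ ≤ k ∧ k < d ℓ := by
      have := Finset.mem_filter.1 hkS
      exact Finset.mem_Ico.1 this.1
    have hkA : σ^[k] x ∈ A ℓ := (Finset.mem_filter.1 hkS).2
    -- x ∈ W' at index ℓ at time k : σ^[k] x ∉ ann
    have hxann : σ^[k] x ∉ ann σ (A ℓ) q := by
      have := Set.mem_iInter.1 hx' ℓ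
      simp only [Wset, Set.mem_iInter, Set.mem_preimage, Set.mem_compl_iff] at this
      exact this k (Set.mem_Ico.2 hkIco)
    have : ∃ i ∈ Set.Icc 1 q, σ^[i] (σ^[k] x) ∈ A ℓ := by
      by_contra h
      push_neg at h
      exact hxann ⟨hkA, Set.mem_iInter₂.2 fun i hi => h i hi⟩
    obtain ⟨i, hi, hiA⟩ := this
    rw [← Function.iterate_add_apply] at hiA
    have hi1 : 1 ≤ i := hi.1
    have hiq : i ≤ q := hi.2
    -- maximality: i + k ≥ d ℓ
    have hge : d ℓ ≤ i + k := by
      by_contra h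
      push_neg at h
      have hmem : i + k ∈ S := by
        refine Finset.mem_filter.2 ⟨Finset.mem_Ico.2 ⟨?_, h⟩, hiA⟩
        omega
      have := S.le_max' _ hmem
      omega
    refine Set.mem_iUnion.2 ⟨ℓ, Set.mem_iUnion₂.2 ⟨i + k + 1 - d ℓ, ?_, ?_⟩⟩
    · rw [Finset.mem_Icc]; omega
    · have : d ℓ - 1 + (i + k + 1 - d ℓ) = i + k := by omega
      rw [this]; exact hiA
  -- measure bound on the cover
  have hU : μ (W' \ W) ≤ (q : ℝ≥0∞) * ∑ ℓ, μ (A ℓ) := by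
    calc μ (W' \ W) ≤ μ (⋃ ℓ, ⋃ i ∈ Finset.Icc 1 q, (σ^[d ℓ - 1 + i]) ⁻¹' (A ℓ)) :=
          measure_mono hdiff
      _ ≤ ∑ ℓ, μ (⋃ i ∈ Finset.Icc 1 q, (σ^[d ℓ - 1 + i]) ⁻¹' (A ℓ)) :=
          measure_iUnion_fintype_le _ _
      _ ≤ ∑ ℓ, ∑ i ∈ Finset.Icc 1 q, μ ((σ^[d ℓ - 1 + i]) ⁻¹' (A ℓ)) :=
          Finset.sum_le_sum fun ℓ _ => measure_biUnion_finset_le _ _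
      _ = ∑ ℓ, ∑ i ∈ Finset.Icc 1 q, μ (A ℓ) := by
          refine Finset.sum_congr rfl fun ℓ _ => Finset.sum_congr rfl fun i _ => ?_
          exact (hσ.iterate _).measure_preimage (hA ℓ).nullMeasurableSet
      _ = ∑ ℓ, (q : ℝ≥0∞) * μ (A ℓ) := by
          refine Finset.sum_congr rfl fun ℓ _ => ?_
          rw [Finset.sum_const, Nat.card_Icc]
          simp [nsmul_eq_mul]
      _ = (q : ℝ≥0∞) * ∑ ℓ, μ (A ℓ) := by rw [Finset.mul_sum]
  -- wrap up
  have hWle : μ W ≤ μ W' := measure_mono hsub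
  have hfin' : μ W' ≠ ⊤ := measure_ne_top μ _
  have hdiffeq : μ (W' \ W) = μ W' - μ W :=
    measure_diff hsub hmeasW.nullMeasurableSet (measure_ne_top μ _)
  have habs : |(μ W').toReal - (μ W).toReal| = (μ (W' \ W)).toReal := by
    rw [abs_of_nonneg (by
      have := ENNReal.toReal_mono hfin' hWle
      linarith)]
    rw [hdiffeq, ENNReal.toReal_sub_of_le hWle hfin']
  rw [habs]
  have hrhs : ((q : ℝ≥0∞) * ∑ ℓ, μ (A ℓ)).toReal = (q : ℝ) * ∑ ℓ, (μ (A ℓ)).toReal := by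
    rw [ENNReal.toReal_mul, ENNReal.toReal_natCast, ENNReal.toReal_sum
      (fun ℓ _ => measure_ne_top μ _)]
  calc (μ (W' \ W)).toReal ≤ ((q : ℝ≥0∞) * ∑ ℓ, μ (A ℓ)).toReal := by
        refine ENNReal.toReal_mono ?_ hU
        refine ENNReal.mul_ne_top (ENNReal.natCast_ne_top q) ?_
        exact (ENNReal.sum_lt_top.2 fun ℓ _ => measure_lt_top μ _).ne
    _ = (q : ℝ) * ∑ ℓ, (μ (A ℓ)).toReal := hrhs
end

section
/- For every measurable A ⊆ Ω and all positive integers s, t, m, one has | μ( 𝒲_{[0,s)}(A) ∩ 𝒲_{[s+t, s+t+m)}(A) ) − (1 − s·μ(A))·μ( 𝒲_{[0,m)}(A) ) | ≤ | s·μ(A)·μ(𝒲_{[0,m)}(A)) − Σ_{j=0}^{s-1} μ( A ∩ 𝒲_{[s+t−j, s+t−j+m)}(A) ) | + s·μ( A ∩ 𝒲ᶜ_{[1,s)}(A) ). -/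
open MeasureTheory Set Filter

lemma Wset_mem {Ω : Type*} {σ : Ω → Ω} {J : Set ℕ} {A : Set Ω} {x : Ω} :
    x ∈ Wset σ J A ↔ ∀ k ∈ J, σ^[k] x ∉ A := by
  simp [Wset]

lemma Wset_meas {Ω : Type*} [MeasurableSpace Ω] {σ : Ω → Ω} (hσ : Measurable σ)
    (J : Set ℕ) {A : Set Ω} (hA : MeasurableSet A) : MeasurableSet (Wset σ J A) :=
  MeasurableSet.biInter (Set.to_countable J) fun k _ => (hσ.iterate k) hA.compl

lemma Wset_shift {Ω : Type*} (σ : Ω → Ω) (A : Set Ω) (a m : ℕ) :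
    Wset σ (Set.Ico a (a + m)) A = (σ^[a]) ⁻¹' Wset σ (Set.Ico 0 m) A := by
  ext x
  simp only [Wset_mem, Set.mem_preimage, Set.mem_Ico, zero_le, true_and]
  constructor
  · intro h i hi
    have := h (i + a) ⟨by omega, by omega⟩
    rwa [Function.iterate_add_apply] at this
  · intro h k hk
    obtain ⟨i, rfl⟩ : ∃ i, k = i + a := ⟨k - a, by omega⟩
    rw [Function.iterate_add_apply]
    exact h i (by omega)

/-- For every measurable `A` and positive integers `s, t, m`:
`|μ(𝒲_{[0,s)}(A) ∩ 𝒲_{[s+t,s+t+m)}(A)) − (1 − s·μ(A))·μ(𝒲_{[0,m)}(A))|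
  ≤ |s·μ(A)·μ(𝒲_{[0,m)}(A)) − Σ_{j=0}^{s−1} μ(A ∩ 𝒲_{[s+t−j, s+t−j+m)}(A))|
    + s·μ(A ∩ 𝒲ᶜ_{[1,s)}(A))`. -/
theorem stmt7 {Ω : Type*} [MeasurableSpace Ω] (μ : Measure Ω) [IsProbabilityMeasure μ]
    (σ : Ω → Ω) (hσ : MeasurePreserving σ μ μ)
    (A : Set Ω) (hA : MeasurableSet A) (s t m : ℕ)
    (hs : 0 < s) (ht : 0 < t) (hm : 0 < m) :
    |(μ (Wset σ (Set.Ico 0 s) A ∩ Wset σ (Set.Ico (s + t) (s + t + m)) A)).toReal -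
        (1 - (s : ℝ) * (μ A).toReal) * (μ (Wset σ (Set.Ico 0 m) A)).toReal| ≤
      |(s : ℝ) * (μ A).toReal * (μ (Wset σ (Set.Ico 0 m) A)).toReal -
          ∑ j ∈ Finset.range s,
            (μ (A ∩ Wset σ (Set.Ico (s + t - j) (s + t - j + m)) A)).toReal| +
        (s : ℝ) * (μ (A ∩ (Wset σ (Set.Ico 1 s) A)ᶜ)).toReal := by
  classical
  have hσm := hσ.measurable
  set U := Wset σ (Set.Ico 0 m) A with hUdef
  set V := Wset σ (Set.Ico (s + t) (s + t + m)) A with hVdef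
  set W := Wset σ (Set.Ico 0 s) A with hWdef
  set G := (Wset σ (Set.Ico 1 s) A)ᶜ with hGdef
  set F : ℕ → Set Ω := fun k => (σ^[k]) ⁻¹' A ∩ Wset σ (Set.Ico (k + 1) s) A with hFdef
  have mU : MeasurableSet U := Wset_meas hσm _ hA
  have mV : MeasurableSet V := Wset_meas hσm _ hA
  have mW : MeasurableSet W := Wset_meas hσm _ hA
  have mG : MeasurableSet G := (Wset_meas hσm _ hA).compl
  have mF : ∀ k, MeasurableSet (F k) := fun k =>
    ((hσm.iterate k) hA).inter (Wset_meas hσm _ hA)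
  -- μ V = μ U
  have hVU : μ V = μ U := by
    rw [hVdef, Wset_shift]
    exact (hσ.iterate (s + t)).measure_preimage mU.nullMeasurableSet
  -- partition of Wᶜ ∩ V into last-occurrence pieces
  have hWcU : Wᶜ ∩ V = ⋃ k ∈ Finset.range s, (F k ∩ V) := by
    ext x
    simp only [Set.mem_inter_iff, Set.mem_compl_iff, Set.mem_iUnion, Finset.mem_range,
      exists_prop]
    constructor
    · rintro ⟨hxW, hxV⟩
      have hex : ∃ k, k ≤ s - 1 ∧ σ^[k] x ∈ A := by
        by_contra hcon
        push_neg at hcon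
        exact hxW (Wset_mem.2 fun k hk => hcon k (by have := hk.2; omega))
      obtain ⟨k, hk, hkA⟩ := hex
      set P : ℕ → Prop := fun j => σ^[j] x ∈ A with hP
      set k0 := Nat.findGreatest P (s - 1) with hk0
      have hk0A : P k0 := Nat.findGreatest_spec (P := P) hk hkA
      have hk0le : k0 ≤ s - 1 := Nat.findGreatest_le _
      refine ⟨k0, by omega, ⟨⟨hk0A, Wset_mem.2 fun j hj => ?_⟩, hxV⟩⟩
      have hj1 := hj.1; have hj2 := hj.2
      exact Nat.findGreatest_is_greatest (P := P) (n := s - 1) (by omega) (by omega)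
    · rintro ⟨k, hk, ⟨hkA, _⟩, hxV⟩
      exact ⟨fun h => (Wset_mem.1 h k (Set.mem_Ico.mpr ⟨Nat.zero_le _, hk⟩)) hkA, hxV⟩
  have hkey : ∀ i j, i < j → j < s → Disjoint (F i ∩ V) (F j ∩ V) := by
    intro i j hij hj
    refine Set.disjoint_left.2 ?_
    rintro x ⟨⟨hxA, hxW⟩, _⟩ ⟨⟨hxA', _⟩, _⟩
    exact (Wset_mem.1 hxW j (Set.mem_Ico.mpr ⟨by omega, hj⟩)) hxA'
  have hdisj : (↑(Finset.range s) : Set ℕ).PairwiseDisjoint (fun k => F k ∩ V) := by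
    intro i hi j hj hij
    simp only [Finset.coe_range, Set.mem_Iio] at hi hj
    rcases lt_or_gt_of_ne hij with h | h
    · exact hkey i j h hj
    · exact (hkey j i h hi).symm
  have hsum : μ (Wᶜ ∩ V) = ∑ k ∈ Finset.range s, μ (F k ∩ V) := by
    rw [hWcU]
    exact measure_biUnion_finset hdisj fun k _ => (mF k).inter mV
  have hsplit : μ (W ∩ V) + μ (Wᶜ ∩ V) = μ V := by
    rw [Set.inter_comm W V, Set.inter_comm Wᶜ V, ← Set.diff_eq]
    exact measure_inter_add_diff V mW
  -- identify the shifted measures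
  have hb : ∀ k, k < s → μ ((σ^[k]) ⁻¹' A ∩ V) =
      μ (A ∩ Wset σ (Set.Ico (s + t - k) (s + t - k + m)) A) := by
    intro k hk
    have hit : σ^[s + t] = σ^[s + t - k] ∘ σ^[k] := by
      have h' : s + t - k + k = s + t := by omega
      rw [← Function.iterate_add, h']
    have hVk : V = (σ^[k]) ⁻¹' (Wset σ (Set.Ico (s + t - k) (s + t - k + m)) A) := by
      rw [hVdef, Wset_shift, Wset_shift, hit, Set.preimage_comp]
    rw [hVk, ← Set.preimage_inter]
    exact (hσ.iterate k).measure_preimage (hA.inter (Wset_meas hσm _ hA)).nullMeasurableSet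
  -- bounds relating F k and σ^{-k} A
  have hba : ∀ k, μ (F k ∩ V) ≤ μ ((σ^[k]) ⁻¹' A ∩ V) := fun k =>
    measure_mono (Set.inter_subset_inter_left V Set.inter_subset_left)
  have hab : ∀ k, k < s → μ ((σ^[k]) ⁻¹' A ∩ V) ≤ μ (F k ∩ V) + μ (A ∩ G) := by
    intro k hk
    have hsub : (σ^[k]) ⁻¹' A ∩ V ⊆ (F k ∩ V) ∪ (σ^[k]) ⁻¹' (A ∩ G) := by
      rintro x ⟨hxA, hxV⟩
      by_cases hx : x ∈ Wset σ (Set.Ico (k + 1) s) A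
      · exact Or.inl ⟨⟨hxA, hx⟩, hxV⟩
      · refine Or.inr ⟨hxA, fun hmem => hx ?_⟩
        rw [Wset_mem]
        intro j hj
        have hj1 := hj.1; have hj2 := hj.2
        have h2 := Wset_mem.1 hmem (j - k) (Set.mem_Ico.mpr ⟨by omega, by omega⟩)
        rwa [← Function.iterate_add_apply, (show j - k + k = j by omega)] at h2
    calc μ ((σ^[k]) ⁻¹' A ∩ V) ≤ μ ((F k ∩ V) ∪ (σ^[k]) ⁻¹' (A ∩ G)) := measure_mono hsub
      _ ≤ μ (F k ∩ V) + μ ((σ^[k]) ⁻¹' (A ∩ G)) := measure_union_le _ _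
      _ = μ (F k ∩ V) + μ (A ∩ G) := by
          rw [(hσ.iterate k).measure_preimage (hA.inter mG).nullMeasurableSet]
  -- pass to real numbers
  set u := (μ U).toReal with hu
  set e := (μ (A ∩ G)).toReal with he
  set a : ℕ → ℝ := fun k => (μ (F k ∩ V)).toReal with ha
  set b : ℕ → ℝ := fun j =>
    (μ (A ∩ Wset σ (Set.Ico (s + t - j) (s + t - j + m)) A)).toReal with hbdef
  have he0 : 0 ≤ e := ENNReal.toReal_nonneg
  have hsplitR : (μ (W ∩ V)).toReal = u - ∑ k ∈ Finset.range s, a k := by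
    have h1 : (μ (W ∩ V)).toReal + (μ (Wᶜ ∩ V)).toReal = u := by
      rw [← ENNReal.toReal_add (measure_ne_top μ _) (measure_ne_top μ _), hsplit, hVU]
    have h2 : (μ (Wᶜ ∩ V)).toReal = ∑ k ∈ Finset.range s, a k := by
      rw [hsum, ENNReal.toReal_sum fun k _ => measure_ne_top μ _]
    linarith
  have hbound : ∀ j ∈ Finset.range s, a j ≤ b j ∧ b j ≤ a j + e := by
    intro j hj
    rw [Finset.mem_range] at hj
    constructor
    · refine ENNReal.toReal_mono (measure_ne_top μ _) ?_
      rw [← hb j hj]; exact hba j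
    · have := (hb j hj) ▸ hab j hj
      calc b j ≤ (μ (F j ∩ V) + μ (A ∩ G)).toReal :=
            ENNReal.toReal_mono (by finiteness) this
        _ = a j + e := ENNReal.toReal_add (measure_ne_top μ _) (measure_ne_top μ _)
  set Sa := ∑ k ∈ Finset.range s, a k with hSa
  set Sb := ∑ j ∈ Finset.range s, b j with hSb
  have h1 : Sa ≤ Sb := Finset.sum_le_sum fun j hj => (hbound j hj).1
  have h2 : Sb ≤ Sa + s * e := by
    calc Sb ≤ ∑ j ∈ Finset.range s, (a j + e) :=
          Finset.sum_le_sum fun j hj => (hbound j hj).2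
      _ = Sa + s * e := by
          rw [Finset.sum_add_distrib, Finset.sum_const, Finset.card_range, nsmul_eq_mul]
  rw [hsplitR]
  calc |u - Sa - (1 - (s : ℝ) * (μ A).toReal) * u|
      = |((s : ℝ) * (μ A).toReal * u - Sb) + (Sb - Sa)| := by ring_nf
    _ ≤ |(s : ℝ) * (μ A).toReal * u - Sb| + |Sb - Sa| := abs_add_le _ _
    _ ≤ |(s : ℝ) * (μ A).toReal * u - Sb| + (s : ℝ) * e := by
        rw [abs_of_nonneg (show (0:ℝ) ≤ Sb - Sa by linarith)]; linarith
end

section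
/- The quotient space D̃ is complete: every sequence (x_n) of càdlàg functions on [0,1] that is Cauchy with respect to the pseudometric d_{D̃} admits a càdlàg function x : [0,1] → ℝ^d with d_{D̃}(x_n, x) → 0. -/
open Filter Set Topology

/-- A function `f : ℝ → ℝ^d` is càdlàg on `[0,1]`: right-continuous at every point of
`[0,1)` and with left limits at every point of `(0,1]`. -/
def Cadlag {d : ℕ} (f : ℝ → EuclideanSpace ℝ (Fin d)) : Prop :=
  (∀ t ∈ Set.Ico (0 : ℝ) 1, Tendsto f (nhdsWithin t (Set.Ioi t)) (nhds (f t))) ∧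
  (∀ t ∈ Set.Ioc (0 : ℝ) 1, ∃ L, Tendsto f (nhdsWithin t (Set.Iio t)) (nhds L))

/-- The uniform (sup) distance over `[0,1]`: `‖x − y‖_∞ = sup_{t ∈ [0,1]} ‖x(t) − y(t)‖`. -/
noncomputable def unifDist {d : ℕ} (x y : ℝ → EuclideanSpace ℝ (Fin d)) : ℝ :=
  sSup {c : ℝ | ∃ t ∈ Set.Icc (0 : ℝ) 1, c = ‖x t - y t‖}

/-- A reparametrisation of `[0,1]`: a continuous strictly increasing bijection of `[0,1]`
onto itself. -/
def Reparam (l : ℝ → ℝ) : Prop :=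
  ContinuousOn l (Set.Icc 0 1) ∧ StrictMonoOn l (Set.Icc 0 1) ∧
    Set.BijOn l (Set.Icc 0 1) (Set.Icc 0 1)

/-- The pseudometric `d_{D̃}(x, y) = inf_λ ‖x∘λ − y‖_∞`, the infimum over all
reparametrisations `λ` of `[0,1]`. -/
noncomputable def dTilde {d : ℕ} (x y : ℝ → EuclideanSpace ℝ (Fin d)) : ℝ :=
  sInf {c : ℝ | ∃ l, Reparam l ∧ c = unifDist (x ∘ l) y}


lemma reparam_id : Reparam (id : ℝ → ℝ) :=
  ⟨continuousOn_id, fun a _ b _ h => h, Set.bijOn_id _⟩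

lemma reparam_mapsTo {l : ℝ → ℝ} (hl : Reparam l) : Set.MapsTo l (Set.Icc 0 1) (Set.Icc 0 1) :=
  hl.2.2.mapsTo

lemma reparam_zero {l : ℝ → ℝ} (hl : Reparam l) : l 0 = 0 := by
  obtain ⟨s, hs, hls⟩ := hl.2.2.surjOn (Set.mem_Icc.mpr ⟨le_refl (0:ℝ), zero_le_one⟩)
  rcases eq_or_lt_of_le hs.1 with h | h
  · rw [← h] at hls; exact hls
  · exfalso
    have h1 : l 0 < l s := hl.2.1 ⟨le_refl 0, zero_le_one⟩ hs h
    have h2 : (0:ℝ) ≤ l 0 := (reparam_mapsTo hl ⟨le_refl 0, zero_le_one⟩).1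
    rw [hls] at h1; linarith

lemma reparam_one {l : ℝ → ℝ} (hl : Reparam l) : l 1 = 1 := by
  obtain ⟨s, hs, hls⟩ := hl.2.2.surjOn (Set.mem_Icc.mpr ⟨zero_le_one, le_refl (1:ℝ)⟩)
  rcases eq_or_lt_of_le hs.2 with h | h
  · rw [h] at hls; exact hls
  · exfalso
    have h1 : l s < l 1 := hl.2.1 hs ⟨zero_le_one, le_refl 1⟩ h
    have h2 : l 1 ≤ 1 := (reparam_mapsTo hl ⟨zero_le_one, le_refl 1⟩).2
    rw [hls] at h1; linarith

lemma reparam_comp {l m : ℝ → ℝ} (hl : Reparam l) (hm : Reparam m) : Reparam (l ∘ m) :=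
  ⟨hl.1.comp hm.1 (reparam_mapsTo hm), hl.2.1.comp hm.2.1 (reparam_mapsTo hm),
    hl.2.2.comp hm.2.2⟩

lemma unifDist_le {d : ℕ} {f g : ℝ → EuclideanSpace ℝ (Fin d)} {c : ℝ}
    (h : ∀ t ∈ Set.Icc (0:ℝ) 1, ‖f t - g t‖ ≤ c) : unifDist f g ≤ c := by
  rw [unifDist]
  refine csSup_le ?_ ?_
  · exact ⟨‖f 0 - g 0‖, 0, ⟨le_refl 0, zero_le_one⟩, rfl⟩
  · rintro b ⟨t, ht, rfl⟩
    exact h t ht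

lemma unifDist_nonneg {d : ℕ} (f g : ℝ → EuclideanSpace ℝ (Fin d)) : 0 ≤ unifDist f g := by
  rw [unifDist]
  exact Real.sSup_nonneg (by rintro b ⟨t, ht, rfl⟩; exact norm_nonneg _)

lemma le_unifDist {d : ℕ} {f g : ℝ → EuclideanSpace ℝ (Fin d)} {Cf Cg : ℝ}
    (hf : ∀ t ∈ Set.Icc (0:ℝ) 1, ‖f t‖ ≤ Cf) (hg : ∀ t ∈ Set.Icc (0:ℝ) 1, ‖g t‖ ≤ Cg)
    {t : ℝ} (ht : t ∈ Set.Icc (0:ℝ) 1) : ‖f t - g t‖ ≤ unifDist f g := by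
  rw [unifDist]
  refine le_csSup ?_ ?_
  · refine ⟨Cf + Cg, ?_⟩
    rintro b ⟨s, hs, rfl⟩
    exact (norm_sub_le _ _).trans (add_le_add (hf s hs) (hg s hs))
  · exact ⟨t, ht, rfl⟩

lemma dTilde_nonneg {d : ℕ} (f g : ℝ → EuclideanSpace ℝ (Fin d)) : 0 ≤ dTilde f g := by
  rw [dTilde]
  exact Real.sInf_nonneg (by rintro b ⟨l, hl, rfl⟩; exact unifDist_nonneg _ _)

lemma dTilde_le {d : ℕ} {f g : ℝ → EuclideanSpace ℝ (Fin d)} {l : ℝ → ℝ} (hl : Reparam l) :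
    dTilde f g ≤ unifDist (f ∘ l) g := by
  rw [dTilde]
  refine csInf_le ?_ ?_
  · exact ⟨0, by rintro b ⟨m, hm, rfl⟩; exact unifDist_nonneg _ _⟩
  · exact ⟨l, hl, rfl⟩

lemma exists_reparam_of_dTilde_lt {d : ℕ} {f g : ℝ → EuclideanSpace ℝ (Fin d)} {c : ℝ}
    (h : dTilde f g < c) : ∃ l, Reparam l ∧ unifDist (f ∘ l) g < c := by
  rw [dTilde] at h
  have hne : {c : ℝ | ∃ l, Reparam l ∧ c = unifDist (f ∘ l) g}.Nonempty :=
    ⟨unifDist (f ∘ id) g, id, reparam_id, rfl⟩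
  obtain ⟨b, ⟨l, hl, rfl⟩, hb⟩ := exists_lt_of_csInf_lt hne h
  exact ⟨l, hl, hb⟩

/-- A càdlàg function is bounded on `[0,1]`. -/
lemma cadlag_bounded {d : ℕ} {f : ℝ → EuclideanSpace ℝ (Fin d)} (hf : Cadlag f) :
    ∃ C, ∀ t ∈ Set.Icc (0:ℝ) 1, ‖f t‖ ≤ C := by
  have hloc : ∀ t : Set.Icc (0:ℝ) 1, ∃ δ > 0, ∃ Ct, ∀ s ∈ Set.Icc (0:ℝ) 1,
      dist s t.1 < δ → ‖f s‖ ≤ Ct := by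
    rintro ⟨t, ht0, ht1⟩
    -- right-side bound
    have hR : ∃ δR > 0, ∃ CR, ∀ s ∈ Set.Icc (0:ℝ) 1, t < s → s < t + δR → ‖f s‖ ≤ CR := by
      by_cases ht1' : t < 1
      · have hmem : {s : ℝ | ‖f s‖ ≤ ‖f t‖ + 1} ∈ 𝓝[>] t := by
          have hball : Metric.ball (f t) 1 ∈ 𝓝 (f t) := Metric.ball_mem_nhds _ one_pos
          filter_upwards [hf.1 t ⟨ht0, ht1'⟩ hball] with s hs
          have : dist (f s) (f t) < 1 := Metric.mem_ball.mp hs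
          rw [dist_eq_norm] at this
          calc ‖f s‖ = ‖f s - f t + f t‖ := by rw [sub_add_cancel]
            _ ≤ ‖f s - f t‖ + ‖f t‖ := norm_add_le _ _
            _ ≤ ‖f t‖ + 1 := by linarith
        obtain ⟨u, hu, hsub⟩ := mem_nhdsGT_iff_exists_Ioo_subset.mp hmem
        exact ⟨u - t, sub_pos.mpr hu, ‖f t‖ + 1,
          fun s _ h1 h2 => hsub ⟨h1, by linarith⟩⟩
      · refine ⟨1, one_pos, 0, fun s hs h1 _ => absurd ?_ (lt_irrefl t)⟩
        exact (h1.trans_le hs.2).trans_le (not_lt.mp ht1')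
    -- left-side bound
    have hL : ∃ δL > 0, ∃ CL, ∀ s ∈ Set.Icc (0:ℝ) 1, t - δL < s → s < t → ‖f s‖ ≤ CL := by
      by_cases ht0' : 0 < t
      · obtain ⟨Lv, hLv⟩ := hf.2 t ⟨ht0', ht1⟩
        have hmem : {s : ℝ | ‖f s‖ ≤ ‖Lv‖ + 1} ∈ 𝓝[<] t := by
          have hball : Metric.ball Lv 1 ∈ 𝓝 Lv := Metric.ball_mem_nhds _ one_pos
          filter_upwards [hLv hball] with s hs
          have : dist (f s) Lv < 1 := Metric.mem_ball.mp hs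
          rw [dist_eq_norm] at this
          calc ‖f s‖ = ‖f s - Lv + Lv‖ := by rw [sub_add_cancel]
            _ ≤ ‖f s - Lv‖ + ‖Lv‖ := norm_add_le _ _
            _ ≤ ‖Lv‖ + 1 := by linarith
        obtain ⟨u, hu, hsub⟩ := mem_nhdsLT_iff_exists_Ioo_subset.mp hmem
        exact ⟨t - u, sub_pos.mpr hu, ‖Lv‖ + 1,
          fun s _ h1 h2 => hsub ⟨by linarith, h2⟩⟩
      · refine ⟨1, one_pos, 0, fun s hs _ h2 => absurd ?_ (lt_irrefl s)⟩
        exact (h2.trans_le (not_lt.mp ht0')).trans_le hs.1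
    obtain ⟨δR, hδR, CR, hCR⟩ := hR
    obtain ⟨δL, hδL, CL, hCL⟩ := hL
    refine ⟨min δR δL, lt_min hδR hδL, max (max CR CL) ‖f t‖, ?_⟩
    intro s hs hd
    rcases lt_trichotomy s t with h | h | h
    · refine le_trans (hCL s hs ?_ h) (le_trans (le_max_right CR CL) (le_max_left _ _))
      have : |s - t| < δL := lt_of_lt_of_le hd (min_le_right _ _)
      rw [abs_sub_lt_iff] at this; linarith [this.2]
    · rw [h]; exact le_max_right _ _
    · refine le_trans (hCR s hs h ?_) (le_trans (le_max_left CR CL) (le_max_left _ _))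
      have : |s - t| < δR := lt_of_lt_of_le hd (min_le_left _ _)
      rw [abs_sub_lt_iff] at this; linarith [this.1]
  choose δ hδ Ct hCt using hloc
  have hcover : Set.Icc (0:ℝ) 1 ⊆ ⋃ i : Set.Icc (0:ℝ) 1, Metric.ball i.1 (δ i) := by
    intro s hs
    exact Set.mem_iUnion.mpr ⟨⟨s, hs⟩, Metric.mem_ball_self (hδ _)⟩
  obtain ⟨F, hF⟩ := isCompact_Icc.elim_finite_subcover _ (fun i => Metric.isOpen_ball) hcover
  have h0 : (0:ℝ) ∈ Set.Icc (0:ℝ) 1 := ⟨le_refl 0, zero_le_one⟩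
  obtain ⟨i0, hi0, _⟩ := Set.mem_iUnion₂.mp (hF h0)
  have hFne : F.Nonempty := ⟨i0, hi0⟩
  refine ⟨F.sup' hFne Ct, ?_⟩
  intro s hs
  obtain ⟨i, hiF, hsb⟩ := Set.mem_iUnion₂.mp (hF hs)
  exact le_trans (hCt i s hs (Metric.mem_ball.mp hsb)) (Finset.le_sup' Ct hiF)

/-- Composition of a càdlàg function with a reparametrisation is càdlàg. -/
lemma cadlag_comp {d : ℕ} {f : ℝ → EuclideanSpace ℝ (Fin d)} {l : ℝ → ℝ}
    (hf : Cadlag f) (hl : Reparam l) : Cadlag (f ∘ l) := by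
  have h01 : (0:ℝ) ∈ Set.Icc (0:ℝ) 1 := ⟨le_refl 0, zero_le_one⟩
  have h11 : (1:ℝ) ∈ Set.Icc (0:ℝ) 1 := ⟨zero_le_one, le_refl 1⟩
  constructor
  · rintro t ⟨ht0, ht1⟩
    have htI : t ∈ Set.Icc (0:ℝ) 1 := ⟨ht0, le_of_lt ht1⟩
    have hlt1 : l t < 1 := by
      have := hl.2.1 htI h11 ht1
      rwa [reparam_one hl] at this
    have hltI : l t ∈ Set.Ico (0:ℝ) 1 := ⟨(reparam_mapsTo hl htI).1, hlt1⟩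
    -- l tends to l t from the right along Ioc t 1
    have hcont : Tendsto l (𝓝[Set.Ioc t 1] t) (𝓝 (l t)) :=
      (hl.1 t htI).mono_left (nhdsWithin_mono t (fun s hs => ⟨ht0.trans (le_of_lt hs.1), hs.2⟩))
    have hmaps : ∀ᶠ s in 𝓝[Set.Ioc t 1] t, l s ∈ Set.Ioi (l t) := by
      filter_upwards [eventually_mem_nhdsWithin] with s hs
      exact hl.2.1 htI ⟨ht0.trans (le_of_lt hs.1), hs.2⟩ hs.1
    have hstep : Tendsto l (𝓝[Set.Ioc t 1] t) (𝓝[>] (l t)) :=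
      tendsto_nhdsWithin_iff.mpr ⟨hcont, hmaps⟩
    have hcomp : Tendsto (f ∘ l) (𝓝[Set.Ioc t 1] t) (𝓝 (f (l t))) :=
      (hf.1 (l t) hltI).comp hstep
    exact hcomp.mono_left (nhdsWithin_le_iff.mpr (Ioc_mem_nhdsGT_of_mem ⟨le_refl t, ht1⟩))
  · rintro t ⟨ht0, ht1⟩
    have htI : t ∈ Set.Icc (0:ℝ) 1 := ⟨le_of_lt ht0, ht1⟩
    have hlt0 : 0 < l t := by
      have := hl.2.1 h01 htI ht0
      rwa [reparam_zero hl] at this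
    have hltI : l t ∈ Set.Ioc (0:ℝ) 1 := ⟨hlt0, (reparam_mapsTo hl htI).2⟩
    obtain ⟨L, hL⟩ := hf.2 (l t) hltI
    refine ⟨L, ?_⟩
    have hcont : Tendsto l (𝓝[Set.Ico 0 t] t) (𝓝 (l t)) :=
      (hl.1 t htI).mono_left (nhdsWithin_mono t (fun s hs => ⟨hs.1, (le_of_lt hs.2).trans ht1⟩))
    have hmaps : ∀ᶠ s in 𝓝[Set.Ico 0 t] t, l s ∈ Set.Iio (l t) := by
      filter_upwards [eventually_mem_nhdsWithin] with s hs
      exact hl.2.1 ⟨hs.1, (le_of_lt hs.2).trans ht1⟩ htI hs.2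
    have hstep : Tendsto l (𝓝[Set.Ico 0 t] t) (𝓝[<] (l t)) :=
      tendsto_nhdsWithin_iff.mpr ⟨hcont, hmaps⟩
    have hcomp : Tendsto (f ∘ l) (𝓝[Set.Ico 0 t] t) (𝓝 L) := hL.comp hstep
    exact hcomp.mono_left (nhdsWithin_le_iff.mpr (Ico_mem_nhdsLT_of_mem ⟨ht0, le_refl t⟩))

/-- A uniform limit (on `[0,1]`) of càdlàg functions is càdlàg. -/
lemma cadlag_unif_limit {d : ℕ} {y : ℝ → EuclideanSpace ℝ (Fin d)}
    {a : ℕ → ℝ → EuclideanSpace ℝ (Fin d)} (ha : ∀ k, Cadlag (a k)) {e : ℕ → ℝ}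
    (he : Tendsto e atTop (nhds 0))
    (hb : ∀ k, ∀ t ∈ Set.Icc (0:ℝ) 1, ‖y t - a k t‖ ≤ e k) : Cadlag y := by
  constructor
  · rintro t ⟨ht0, ht1⟩
    have htI : t ∈ Set.Icc (0:ℝ) 1 := ⟨ht0, le_of_lt ht1⟩
    rw [Metric.tendsto_nhds]
    intro ε hε
    obtain ⟨k, hk⟩ := (he.eventually (eventually_lt_nhds (show (0:ℝ) < ε/4 by positivity))).exists
    have h1 : ∀ᶠ s in 𝓝[>] t, dist (a k s) (a k t) < ε/4 :=
      (Metric.tendsto_nhds.mp ((ha k).1 t ⟨ht0, ht1⟩)) (ε/4) (by positivity)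
    have h2 : ∀ᶠ s in 𝓝[>] t, s ∈ Set.Icc (0:ℝ) 1 := by
      filter_upwards [Ioo_mem_nhdsGT_of_mem (Set.mem_Ico.mpr ⟨le_refl t, ht1⟩)] with s hs
      exact ⟨ht0.trans (le_of_lt hs.1), le_of_lt hs.2⟩
    filter_upwards [h1, h2] with s hs1 hs2
    have d1 : dist (y s) (a k s) ≤ e k := by rw [dist_eq_norm]; exact hb k s hs2
    have d2 : dist (a k t) (y t) ≤ e k := by
      rw [dist_eq_norm, norm_sub_rev]; exact hb k t htI
    have htr := dist_triangle4 (y s) (a k s) (a k t) (y t)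
    linarith
  · rintro t ⟨ht0, ht1⟩
    have htI : t ∈ Set.Icc (0:ℝ) 1 := ⟨le_of_lt ht0, ht1⟩
    choose L hL using fun k => (ha k).2 t ⟨ht0, ht1⟩
    have hIcc : ∀ᶠ s in 𝓝[<] t, s ∈ Set.Icc (0:ℝ) 1 := by
      filter_upwards [Ioo_mem_nhdsLT_of_mem (Set.mem_Ioc.mpr ⟨ht0, le_refl t⟩)] with s hs
      exact ⟨le_of_lt hs.1, (le_of_lt hs.2).trans ht1⟩
    have hLd : ∀ k j, dist (L k) (L j) ≤ e k + e j := by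
      intro k j
      refine le_of_tendsto ((hL k).dist (hL j)) ?_
      filter_upwards [hIcc] with s hs
      calc dist (a k s) (a j s) ≤ dist (a k s) (y s) + dist (y s) (a j s) := dist_triangle _ _ _
        _ ≤ e k + e j := by
            refine add_le_add ?_ ?_
            · rw [dist_eq_norm, norm_sub_rev]; exact hb k s hs
            · rw [dist_eq_norm]; exact hb j s hs
    have hLcau : CauchySeq L := by
      rw [Metric.cauchySeq_iff']
      intro ε hε
      obtain ⟨N, hN⟩ := (he.eventually (eventually_lt_nhds (show (0:ℝ) < ε/2 by positivity))).exists_forall_of_atTop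
      exact ⟨N, fun n hn => lt_of_le_of_lt (hLd n N)
        (by have := hN n hn; have := hN N (le_refl N); linarith)⟩
    obtain ⟨Lim, hLim⟩ := cauchySeq_tendsto_of_complete hLcau
    refine ⟨Lim, ?_⟩
    rw [Metric.tendsto_nhds]
    intro ε hε
    have hev : ∀ᶠ k in atTop, e k < ε/3 ∧ dist (L k) Lim < ε/3 :=
      (he.eventually (eventually_lt_nhds (by positivity))).and
        ((Metric.tendsto_nhds.mp hLim) (ε/3) (by positivity))
    obtain ⟨k, hk1, hk2⟩ := hev.exists
    have h1 : ∀ᶠ s in 𝓝[<] t, dist (a k s) (L k) < ε/3 :=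
      (Metric.tendsto_nhds.mp (hL k)) (ε/3) (by positivity)
    filter_upwards [h1, hIcc] with s hs1 hs2
    calc dist (y s) Lim ≤ dist (y s) (a k s) + dist (a k s) (L k) + dist (L k) Lim :=
          dist_triangle4 _ _ _ _
      _ < ε/3 + ε/3 + ε/3 := by
          refine add_lt_add_of_lt_of_lt (add_lt_add_of_le_of_lt ?_ hs1) hk2
          rw [dist_eq_norm]; exact le_of_lt (lt_of_le_of_lt (hb k s hs2) hk1)
      _ = ε := by ring

/-- The quotient space `D̃` is complete: every sequence of càdlàg functions on `[0,1]`
which is Cauchy for the pseudometric `d_{D̃}` admits a càdlàg limit in `d_{D̃}`. -/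
theorem stmt10 {d : ℕ} (x : ℕ → ℝ → EuclideanSpace ℝ (Fin d)) (hx : ∀ n, Cadlag (x n))
    (hcauchy : ∀ ε > (0 : ℝ), ∃ N : ℕ, ∀ m ≥ N, ∀ n ≥ N, dTilde (x m) (x n) < ε) :
    ∃ y : ℝ → EuclideanSpace ℝ (Fin d), Cadlag y ∧
      Tendsto (fun n => dTilde (x n) y) atTop (nhds 0) := by
  -- bound for each x n
  choose C hC using fun n => cadlag_bounded (hx n)
  -- subsequence with fast Cauchy rate
  have hsub : ∀ k : ℕ, ∃ N : ℕ, ∀ m ≥ N, ∀ n ≥ N, dTilde (x m) (x n) < (1/2)^k := by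
    intro k
    exact hcauchy _ (by positivity)
  choose N hN using hsub
  -- φ : strictly increasing, φ k ≥ N k
  set φ : ℕ → ℕ := fun k => Nat.rec (N 0) (fun k ih => max (ih + 1) (N (k+1))) k with hφ
  have hφ0 : φ 0 = N 0 := rfl
  have hφs : ∀ k, φ (k+1) = max (φ k + 1) (N (k+1)) := fun k => rfl
  have hφN : ∀ k, N k ≤ φ k := by
    intro k; cases k with
    | zero => exact le_refl _
    | succ k => rw [hφs]; exact le_max_right _ _
  have hφmono : ∀ k, φ k < φ (k+1) := by
    intro k; rw [hφs]; exact lt_of_lt_of_le (Nat.lt_succ_self _) (le_max_left _ _)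
  have hrate : ∀ k, dTilde (x (φ (k+1))) (x (φ k)) < (1/2)^k := by
    intro k
    exact hN k _ (le_trans (hφN k) (le_of_lt (hφmono k))) _ (hφN k |>.trans (le_refl _))
  -- choose reparametrisations
  have hl : ∀ k, ∃ l, Reparam l ∧ unifDist (x (φ (k+1)) ∘ l) (x (φ k)) < (1/2)^k :=
    fun k => exists_reparam_of_dTilde_lt (hrate k)
  choose l hlRep hlDist using hl
  -- σ : composed reparametrisations
  set σ : ℕ → ℝ → ℝ := fun k => Nat.rec id (fun k ih => l k ∘ ih) k with hσ
  have hσ0 : σ 0 = id := rfl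
  have hσs : ∀ k, σ (k+1) = l k ∘ σ k := fun k => rfl
  have hσRep : ∀ k, Reparam (σ k) := by
    intro k; induction k with
    | zero => exact reparam_id
    | succ k ih => rw [hσs]; exact reparam_comp (hlRep k) ih
  -- the sequence a k = x (φ k) ∘ σ k
  set a : ℕ → ℝ → EuclideanSpace ℝ (Fin d) := fun k => x (φ k) ∘ σ k with ha
  have haCadlag : ∀ k, Cadlag (a k) := fun k => cadlag_comp (hx _) (hσRep k)
  have haC : ∀ k, ∀ t ∈ Set.Icc (0:ℝ) 1, ‖a k t‖ ≤ C (φ k) := by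
    intro k t ht
    exact hC (φ k) _ (reparam_mapsTo (hσRep k) ht)
  -- successive distances
  have hstep : ∀ k, ∀ t ∈ Set.Icc (0:ℝ) 1, ‖a (k+1) t - a k t‖ ≤ (1/2)^k := by
    intro k t ht
    have hσt : σ k t ∈ Set.Icc (0:ℝ) 1 := reparam_mapsTo (hσRep k) ht
    have : ‖(x (φ (k+1)) ∘ l k) (σ k t) - x (φ k) (σ k t)‖
        ≤ unifDist (x (φ (k+1)) ∘ l k) (x (φ k)) := by
      refine le_unifDist (Cf := C (φ (k+1))) (Cg := C (φ k)) ?_ ?_ hσt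
      · intro s hs; exact hC _ _ (reparam_mapsTo (hlRep k) hs)
      · intro s hs; exact hC _ _ hs
    calc ‖a (k+1) t - a k t‖ = ‖(x (φ (k+1)) ∘ l k) (σ k t) - x (φ k) (σ k t)‖ := by
          simp [ha, hσs, Function.comp]
      _ ≤ unifDist (x (φ (k+1)) ∘ l k) (x (φ k)) := this
      _ ≤ (1/2)^k := le_of_lt (hlDist k)
  -- pointwise Cauchy, define y
  have hcau : ∀ t ∈ Set.Icc (0:ℝ) 1, CauchySeq (fun k => a k t) := by
    intro t ht
    apply cauchySeq_of_le_geometric (1/2) 1 (by norm_num)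
    intro k
    rw [dist_eq_norm, norm_sub_rev]
    simpa using hstep k t ht
  have hlim : ∀ t ∈ Set.Icc (0:ℝ) 1, ∃ p, Tendsto (fun k => a k t) atTop (nhds p) :=
    fun t ht => cauchySeq_tendsto_of_complete (hcau t ht)
  classical
  set y : ℝ → EuclideanSpace ℝ (Fin d) :=
    fun t => if h : t ∈ Set.Icc (0:ℝ) 1 then (hlim t h).choose else 0 with hy
  have hyt : ∀ t (h : t ∈ Set.Icc (0:ℝ) 1), Tendsto (fun k => a k t) atTop (nhds (y t)) := by
    intro t h; rw [hy]; simp only [dif_pos h]; exact (hlim t h).choose_spec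
  -- uniform bound ‖y t - a k t‖ ≤ 2 * (1/2)^k
  have hyb : ∀ k, ∀ t ∈ Set.Icc (0:ℝ) 1, ‖y t - a k t‖ ≤ 2 * (1/2)^k := by
    intro k t ht
    have := dist_le_of_le_geometric_of_tendsto (1/2) 1 (by norm_num)
      (fun n => by rw [dist_eq_norm, norm_sub_rev]; simpa using hstep n t ht) (hyt t ht) k
    rw [dist_comm, dist_eq_norm] at this
    calc ‖y t - a k t‖ ≤ 1 * (1/2)^k / (1 - 1/2) := this
      _ = 2 * (1/2)^k := by ring
  -- y is càdlàg
  have hyCadlag : Cadlag y := by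
    refine cadlag_unif_limit haCadlag (e := fun k => 2 * (1/2)^k) ?_ hyb
    have : Tendsto (fun k : ℕ => (1/2:ℝ)^k) atTop (nhds 0) :=
      tendsto_pow_atTop_nhds_zero_of_lt_one (by norm_num) (by norm_num)
    simpa using this.const_mul 2
  -- y bounded
  obtain ⟨Cy, hCy⟩ := cadlag_bounded hyCadlag
  refine ⟨y, hyCadlag, ?_⟩
  -- dTilde (x (φ k)) y ≤ 2 * (1/2)^k
  have hkey : ∀ k, dTilde (x (φ k)) y ≤ 2 * (1/2)^k := by
    intro k
    refine le_trans (dTilde_le (hσRep k)) (unifDist_le ?_)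
    intro t ht
    rw [norm_sub_rev]
    exact hyb k t ht
  -- conclude
  rw [Metric.tendsto_atTop]
  intro ε hε
  obtain ⟨M, hM⟩ := hcauchy (ε/2) (by positivity)
  obtain ⟨k, hk⟩ : ∃ k : ℕ, 2 * (1/2:ℝ)^k < ε/2 := by
    have : Tendsto (fun k : ℕ => 2 * (1/2:ℝ)^k) atTop (nhds 0) := by
      have : Tendsto (fun k : ℕ => (1/2:ℝ)^k) atTop (nhds 0) :=
        tendsto_pow_atTop_nhds_zero_of_lt_one (by norm_num) (by norm_num)
      simpa using this.const_mul 2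
    obtain ⟨k, hk⟩ := (this.eventually (eventually_lt_nhds (show (0:ℝ) < ε/2 by positivity))).exists
    exact ⟨k, hk⟩
  -- take k' ≥ k with φ k' ≥ M
  have hφge : ∀ k, k ≤ φ k := by
    intro k; induction k with
    | zero => exact Nat.zero_le _
    | succ k ih => rw [hφs]; exact le_trans (Nat.succ_le_succ ih) (le_max_left _ _)
  refine ⟨M + k, ?_⟩
  intro n hn
  set k' := M + k with hk'
  have hφk' : M ≤ φ k' := le_trans (Nat.le_add_right M k) (hφge k')
  have h1 : dTilde (x n) (x (φ k')) < ε/2 := hM n (le_trans (Nat.le_add_right M k) hn) _ hφk'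
  have h2 : dTilde (x (φ k')) y < ε/2 := by
    refine lt_of_le_of_lt (hkey k') (lt_of_le_of_lt ?_ hk)
    have : (1/2:ℝ)^k' ≤ (1/2)^k :=
      pow_le_pow_of_le_one (by norm_num) (by norm_num) (by omega)
    linarith
  -- triangle inequality
  have htri : dTilde (x n) y < ε := by
    obtain ⟨l₁, hl₁, hd₁⟩ := exists_reparam_of_dTilde_lt h1
    obtain ⟨l₂, hl₂, hd₂⟩ := exists_reparam_of_dTilde_lt h2
    have hle : dTilde (x n) y ≤ unifDist (x n ∘ (l₁ ∘ l₂)) y :=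
      dTilde_le (reparam_comp hl₁ hl₂)
    have hsum : unifDist (x n ∘ (l₁ ∘ l₂)) y
        ≤ unifDist (x n ∘ l₁) (x (φ k')) + unifDist (x (φ k') ∘ l₂) y := by
      apply unifDist_le
      intro t ht
      have hl₂t : l₂ t ∈ Set.Icc (0:ℝ) 1 := reparam_mapsTo hl₂ ht
      have e1 : ‖(x n ∘ l₁) (l₂ t) - x (φ k') (l₂ t)‖ ≤ unifDist (x n ∘ l₁) (x (φ k')) := by
        refine le_unifDist (Cf := C n) (Cg := C (φ k')) ?_ ?_ hl₂t
        · intro s hs; exact hC _ _ (reparam_mapsTo hl₁ hs)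
        · intro s hs; exact hC _ _ hs
      have e2 : ‖(x (φ k') ∘ l₂) t - y t‖ ≤ unifDist (x (φ k') ∘ l₂) y := by
        refine le_unifDist (Cf := C (φ k')) (Cg := Cy) ?_ hCy ht
        intro s hs; exact hC _ _ (reparam_mapsTo hl₂ hs)
      calc ‖(x n ∘ (l₁ ∘ l₂)) t - y t‖
          ≤ ‖(x n ∘ l₁) (l₂ t) - x (φ k') (l₂ t)‖ + ‖(x (φ k') ∘ l₂) t - y t‖ := by
            simpa [Function.comp] using norm_sub_le_norm_sub_add_norm_sub
              ((x n) (l₁ (l₂ t))) ((x (φ k')) (l₂ t)) (y t)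
        _ ≤ unifDist (x n ∘ l₁) (x (φ k')) + unifDist (x (φ k') ∘ l₂) y := add_le_add e1 e2
    linarith
  rw [Real.dist_eq, sub_zero, abs_of_nonneg (dTilde_nonneg _ _)]
  exact htri
end

section
/- The quotient space D̃ is separable: there exists a countable set S of càdlàg functions [0,1] → ℝ^d such that for every càdlàg x : [0,1] → ℝ^d and every ε > 0 there is y ∈ S with d_{D̃}(x, y) < ε. -/
/-!
Billingsley's argument. Right-continuity and the existence of left limits give, by a supremum
argument, a partition `0 = t₀ < ⋯ < tₙ = 1` such that `x` oscillates by at most `ε` on each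
`[tⱼ, tⱼ₊₁)`. The piecewise linear reparametrisation `λ` with `λ (j / n) = tⱼ` makes `x ∘ λ`
uniformly `ε`-close to a step function that jumps only on the grid `j / n`, and rounding its
values into a countable dense subset of `ℝ^d` leaves countably many step functions.
-/

open Filter Set Topology

section Partition

variable {E : Type*} [PseudoMetricSpace E] {x : ℝ → E} {ε a b c : ℝ}

def HasOscPartition (x : ℝ → E) (ε a b : ℝ) : Prop :=
  ∃ (n : ℕ) (t : ℕ → ℝ), t 0 = a ∧ t n = b ∧ (∀ j < n, t j < t (j + 1)) ∧
    ∀ j < n, ∀ u ∈ Ico (t j) (t (j + 1)), dist (x u) (x (t j)) ≤ ε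

theorem HasOscPartition.refl : HasOscPartition x ε a a :=
  ⟨0, fun _ => a, rfl, rfl, by simp, by simp⟩

theorem HasOscPartition.extend (h : HasOscPartition x ε a b) (hbc : b < c)
    (hosc : ∀ u ∈ Ico b c, dist (x u) (x b) ≤ ε) : HasOscPartition x ε a c := by
  obtain ⟨n, t, ht0, htn, hmono, hosc'⟩ := h
  refine ⟨n + 1, fun j => if j ≤ n then t j else c, by simp [ht0], by simp, ?_, ?_⟩ <;>
    intro j hj <;> rcases (Nat.lt_succ_iff.1 hj).lt_or_eq with hj | rfl
  · simpa [hj.le, Nat.succ_le_of_lt hj] using hmono j hj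
  · simpa [htn] using hbc
  · simpa [hj.le, Nat.succ_le_of_lt hj] using hosc' j hj
  · simpa [htn] using hosc

theorem exists_hasOscPartition (hab : a < b)
    (hright : ∀ t ∈ Ico a b, Tendsto x (𝓝[>] t) (𝓝 (x t)))
    (hleft : ∀ t ∈ Ioc a b, ∃ L, Tendsto x (𝓝[<] t) (𝓝 L)) (hε : 0 < ε) :
    HasOscPartition x ε a b := by
  set A := {c | c ≤ b ∧ HasOscPartition x ε a c}
  have hA : BddAbove A := ⟨b, fun c hc => hc.1⟩
  have haA : a ∈ A := ⟨hab.le, .refl⟩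
  set s := sSup A
  have has : a ≤ s := le_csSup hA haA
  have hsb : s ≤ b := csSup_le ⟨a, haA⟩ fun c hc => hc.1
  have hsA : HasOscPartition x ε a s := by
    rcases has.eq_or_lt with h | has
    · exact h ▸ .refl
    obtain ⟨L, hL⟩ := hleft s ⟨has, hsb⟩
    obtain ⟨l, hl, hsub⟩ :=
      mem_nhdsLT_iff_exists_Ioo_subset.1 (hL (Metric.ball_mem_nhds L (half_pos hε)))
    obtain ⟨c, hcA, hlc⟩ := exists_lt_of_lt_csSup ⟨a, haA⟩ hl
    rcases (le_csSup hA hcA).eq_or_lt with hcs | hcs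
    · rw [show s = c from hcs.symm]; exact hcA.2
    refine hcA.2.extend hcs fun u hu => ?_
    rcases hu.1.eq_or_lt with rfl | hcu
    · simp [hε.le]
    have hu' : dist (x u) L < ε / 2 := hsub ⟨hlc.trans hcu, hu.2⟩
    have hc' : dist (x c) L < ε / 2 := hsub ⟨hlc, hcs⟩
    linarith [dist_triangle_right (x u) (x c) L]
  rcases hsb.eq_or_lt with h | hsb
  · exact h ▸ hsA
  obtain ⟨r, hr, hsub⟩ := mem_nhdsGT_iff_exists_Ioo_subset.1
    (hright s ⟨has, hsb⟩ (Metric.closedBall_mem_nhds (x s) hε))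
  have hs_lt : s < min r b := lt_min hr hsb
  have hrA : min r b ∈ A := by
    refine ⟨min_le_right _ _, hsA.extend hs_lt fun u hu => ?_⟩
    rcases hu.1.eq_or_lt with rfl | hsu
    · simp [hε.le]
    exact hsub ⟨hsu, hu.2.trans_le (min_le_left _ _)⟩
  exact absurd (le_csSup hA hrA) hs_lt.not_ge

end Partition

theorem bijOn_Icc_of_continuousOn_of_strictMonoOn {f : ℝ → ℝ} {a b : ℝ} (hab : a ≤ b)
    (hcont : ContinuousOn f (Icc a b)) (hmono : StrictMonoOn f (Icc a b)) :
    BijOn f (Icc a b) (Icc (f a) (f b)) :=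
  ⟨fun _ hu => ⟨hmono.monotoneOn (left_mem_Icc.2 hab) hu hu.1,
      hmono.monotoneOn hu (right_mem_Icc.2 hab) hu.2⟩,
    hmono.injOn, intermediate_value_Icc hab hcont⟩

section GridInterp

variable {n : ℕ} {t : ℕ → ℝ}

noncomputable def gridInterp (n : ℕ) (t : ℕ → ℝ) (u : ℝ) : ℝ :=
  t 0 + ∑ j ∈ Finset.range n, (t (j + 1) - t j) * max 0 (min 1 (n * u - j))

theorem continuous_gridInterp : Continuous (gridInterp n t) := by
  unfold gridInterp; fun_prop

theorem gridInterp_natCast_div (hn : n ≠ 0) {k : ℕ} (hk : k ≤ n) :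
    gridInterp n t (k / n) = t k := by
  have hnk : (n : ℝ) * (k / n) = k := mul_div_cancel₀ _ (Nat.cast_ne_zero.2 hn)
  have hlow : ∀ j ∈ Finset.range k,
      (t (j + 1) - t j) * max 0 (min 1 ((k : ℝ) - j)) = t (j + 1) - t j := by
    intro j hj
    have : (1 : ℝ) ≤ k - j := by
      rw [le_sub_iff_add_le', ← Nat.cast_succ, Nat.cast_le]; exact Finset.mem_range.1 hj
    simp [min_eq_left this]
  have hhigh : ∀ j ∈ Finset.Ico k n, (t (j + 1) - t j) * max 0 (min 1 ((k : ℝ) - j)) = 0 := by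
    intro j hj
    have : (k : ℝ) - j ≤ 0 := sub_nonpos.2 (Nat.cast_le.2 (Finset.mem_Ico.1 hj).1)
    simp [max_eq_left ((min_le_right _ _).trans this)]
  rw [gridInterp, hnk, ← Finset.sum_range_add_sum_Ico _ hk, Finset.sum_congr rfl hlow,
    Finset.sum_eq_zero hhigh, Finset.sum_range_sub (fun j => t j)]
  ring

theorem strictMonoOn_gridInterp (hn : 0 < n) (hmono : ∀ j < n, t j < t (j + 1)) :
    StrictMonoOn (gridInterp n t) (Icc 0 1) := by
  intro u hu u' hu' huu'
  have hn' : (0 : ℝ) < n := Nat.cast_pos.2 hn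
  have hnu : 0 ≤ (n : ℝ) * u := mul_nonneg hn'.le hu.1
  have hnuu' : (n : ℝ) * u < n * u' := mul_lt_mul_of_pos_left huu' hn'
  set j := ⌊(n : ℝ) * u⌋₊
  have hjn : j < n :=
    (Nat.floor_lt hnu).2 (hnuu'.trans_le (mul_le_of_le_one_right hn'.le hu'.2))
  -- the summand of index `j` increases strictly, since `n * u` lies in `[j, j + 1)`
  have hj_lt : (n : ℝ) * u - j < max 0 (min 1 (n * u' - j)) :=
    lt_max_of_lt_right (lt_min (by linarith [Nat.lt_floor_add_one ((n : ℝ) * u)]) (by linarith))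
  have hj_eq : max 0 (min 1 ((n : ℝ) * u - j)) = n * u - j := by
    rw [min_eq_right (by linarith [Nat.lt_floor_add_one ((n : ℝ) * u)])]
    exact max_eq_right (sub_nonneg.2 (Nat.floor_le hnu))
  refine add_lt_add_right (Finset.sum_lt_sum (fun i hi => ?_) ⟨j, Finset.mem_range.2 hjn, ?_⟩) _
  · exact mul_le_mul_of_nonneg_left (by gcongr) (sub_nonneg.2 (hmono i (Finset.mem_range.1 hi)).le)
  · exact mul_lt_mul_of_pos_left (by rwa [hj_eq]) (sub_pos.2 (hmono j hjn))

theorem reparam_gridInterp (ht0 : t 0 = 0) (htn : t n = 1) (hmono : ∀ j < n, t j < t (j + 1)) :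
    Reparam (gridInterp n t) := by
  have hn : n ≠ 0 := by rintro rfl; simp [ht0] at htn
  have hmono' := strictMonoOn_gridInterp (Nat.pos_of_ne_zero hn) hmono
  have h0 : gridInterp n t 0 = 0 := by
    simpa [ht0] using gridInterp_natCast_div (t := t) hn (Nat.zero_le n)
  have h1 : gridInterp n t 1 = 1 := by
    simpa [htn, hn] using gridInterp_natCast_div (t := t) hn le_rfl
  refine ⟨continuous_gridInterp.continuousOn, hmono', ?_⟩
  simpa [h0, h1] using
    bijOn_Icc_of_continuousOn_of_strictMonoOn zero_le_one continuous_gridInterp.continuousOn hmono'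

theorem dist_gridInterp_le {E : Type*} [PseudoMetricSpace E] {x : ℝ → E} {ε s : ℝ} (hn : 0 < n)
    (hmono : ∀ j < n, t j < t (j + 1))
    (hosc : ∀ j < n, ∀ u ∈ Ico (t j) (t (j + 1)), dist (x u) (x (t j)) ≤ ε) (hε : 0 ≤ ε)
    (hs : s ∈ Icc 0 1) : dist (x (gridInterp n t s)) (x (t ⌊(n : ℝ) * s⌋₊)) ≤ ε := by
  have hn' : (0 : ℝ) < n := Nat.cast_pos.2 hn
  have hns : 0 ≤ (n : ℝ) * s := mul_nonneg hn'.le hs.1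
  have hl := strictMonoOn_gridInterp hn hmono
  set j := ⌊(n : ℝ) * s⌋₊
  have hjn : j ≤ n := Nat.floor_le_of_le (mul_le_of_le_one_right hn'.le hs.2)
  have hjs : (j : ℝ) / n ≤ s := (div_le_iff₀' hn').2 (Nat.floor_le hns)
  have hj_mem : (j : ℝ) / n ∈ Icc 0 1 :=
    ⟨by positivity, (div_le_one hn').2 (Nat.cast_le.2 hjn)⟩
  have hlow : t j ≤ gridInterp n t s := by
    rw [← gridInterp_natCast_div (t := t) hn.ne' hjn]; exact hl.monotoneOn hj_mem hs hjs
  rcases hjn.lt_or_eq with hjn | hjn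
  · have hsj : s < ((j + 1 : ℕ) : ℝ) / n := by
      rw [lt_div_iff₀' hn', Nat.cast_succ]; exact Nat.lt_floor_add_one _
    have hhigh : gridInterp n t s < t (j + 1) := by
      rw [← gridInterp_natCast_div (t := t) hn.ne' hjn]
      exact hl hs ⟨by positivity, (div_le_one hn').2 (Nat.cast_le.2 hjn)⟩ hsj
    exact hosc j hjn _ ⟨hlow, hhigh⟩
  · have hsj : s = j / n := le_antisymm (by simpa [hjn, hn'.ne'] using hs.2) hjs
    rw [hsj, gridInterp_natCast_div hn.ne' hjn.le, dist_self]
    exact hε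

end GridInterp

section GridStep

variable {X : Type*} [TopologicalSpace X] {c : ℝ}

theorem tendsto_comp_floor_mul_nhdsGE (G : ℤ → X) (hc : 0 ≤ c) (t : ℝ) :
    Tendsto (fun u => G ⌊c * u⌋) (𝓝[≥] t) (𝓝 (G ⌊c * t⌋)) :=
  have hmul : Tendsto (c * ·) (𝓝[≥] t) (𝓝[≥] (c * t)) :=
    (continuous_const_mul c).continuousWithinAt.tendsto_nhdsWithin
      fun _ hu => mul_le_mul_of_nonneg_left hu hc
  (tendsto_pure_nhds G _).comp ((tendsto_floor_right_pure_floor _).comp hmul)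

theorem exists_tendsto_comp_floor_mul_nhdsLT (G : ℤ → X) (hc : 0 ≤ c) (t : ℝ) :
    ∃ L, Tendsto (fun u => G ⌊c * u⌋) (𝓝[<] t) (𝓝 L) := by
  rcases hc.eq_or_lt with rfl | hc
  · exact ⟨G 0, by simpa using tendsto_const_nhds⟩
  have hmul : Tendsto (c * ·) (𝓝[<] t) (𝓝[<] (c * t)) :=
    (continuous_const_mul c).continuousWithinAt.tendsto_nhdsWithin
      fun _ hu => mul_lt_mul_of_pos_left hu hc
  exact ⟨_, (tendsto_pure_nhds G _).comp ((tendsto_floor_left_pure_ceil_sub_one _).comp hmul)⟩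

noncomputable def gridStep (n : ℕ) (q : Fin (n + 1) → X) (u : ℝ) : X :=
  q (Fin.clamp ⌊(n : ℝ) * u⌋₊ n)

end GridStep

theorem cadlag_gridStep {d n : ℕ} (q : Fin (n + 1) → EuclideanSpace ℝ (Fin d)) :
    Cadlag (gridStep n q) := by
  set G : ℤ → EuclideanSpace ℝ (Fin d) := fun k => q (Fin.clamp k.toNat n)
  have hG : gridStep n q = fun u => G ⌊(n : ℝ) * u⌋ := by
    funext u; simp only [G, Int.floor_toNat]; rfl
  rw [hG]
  exact ⟨fun t _ => (tendsto_comp_floor_mul_nhdsGE G n.cast_nonneg t).mono_left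
      (nhdsWithin_mono _ Ioi_subset_Ici_self),
    fun t _ => exists_tendsto_comp_floor_mul_nhdsLT G n.cast_nonneg t⟩

theorem dTilde_le_of_reparam {d : ℕ} {x y : ℝ → EuclideanSpace ℝ (Fin d)} {l : ℝ → ℝ} {c : ℝ}
    (hl : Reparam l) (hc : 0 ≤ c) (h : ∀ s ∈ Icc (0 : ℝ) 1, dist (x (l s)) (y s) ≤ c) :
    dTilde x y ≤ c := by
  have hbdd : BddBelow {c : ℝ | ∃ l, Reparam l ∧ c = unifDist (x ∘ l) y} := by
    refine ⟨0, ?_⟩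
    rintro _ ⟨l, -, rfl⟩
    exact Real.sSup_nonneg (by rintro _ ⟨s, -, rfl⟩; positivity)
  refine (csInf_le hbdd ⟨l, hl, rfl⟩).trans (Real.sSup_le ?_ hc)
  rintro _ ⟨s, hs, rfl⟩
  rw [← dist_eq_norm]
  exact h s hs

/-- The quotient space `D̃` is separable: there is a countable set `S` of càdlàg
functions on `[0,1]` such that every càdlàg function is within `ε` of some element of `S`
in the pseudometric `d_{D̃}`, for every `ε > 0`. -/
theorem stmt11 (d : ℕ) :
    ∃ S : Set (ℝ → EuclideanSpace ℝ (Fin d)), S.Countable ∧ (∀ y ∈ S, Cadlag y) ∧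
      ∀ x : ℝ → EuclideanSpace ℝ (Fin d), Cadlag x →
        ∀ ε > (0 : ℝ), ∃ y ∈ S, dTilde x y < ε := by
  obtain ⟨Q, hQc, hQd⟩ := TopologicalSpace.exists_countable_dense (EuclideanSpace ℝ (Fin d))
  have := hQc.to_subtype
  refine ⟨⋃ n : ℕ, range fun q : Fin (n + 1) → Q => gridStep n fun j => (q j : _),
    countable_iUnion fun n => countable_range _, ?_, ?_⟩
  · simp only [mem_iUnion, mem_range]
    rintro _ ⟨n, q, rfl⟩
    exact cadlag_gridStep _
  intro x hx ε hε
  obtain ⟨n, t, ht0, htn, hmono, hosc⟩ :=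
    exists_hasOscPartition zero_lt_one hx.1 hx.2 (by positivity : 0 < ε / 4)
  have hn : 0 < n := Nat.pos_of_ne_zero (by rintro rfl; simp [ht0] at htn)
  choose q hqQ hq using fun j : Fin (n + 1) =>
    Metric.mem_closure_iff.1 (hQd.closure_eq ▸ mem_univ (x (t j))) (ε / 4) (by positivity)
  refine ⟨gridStep n q, mem_iUnion.2 ⟨n, fun j => ⟨q j, hqQ j⟩, rfl⟩, ?_⟩
  refine (dTilde_le_of_reparam (reparam_gridInterp ht0 htn hmono) (by positivity)
    fun s hs => ?_).trans_lt (by linarith : ε / 2 < ε)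
  have hj : ⌊(n : ℝ) * s⌋₊ ≤ n :=
    Nat.floor_le_of_le (mul_le_of_le_one_right n.cast_nonneg hs.2)
  have hqs : dist (x (t ⌊(n : ℝ) * s⌋₊)) (gridStep n q s) < ε / 4 := by
    have := hq (Fin.clamp ⌊(n : ℝ) * s⌋₊ n)
    rwa [Fin.coe_clamp, min_eq_left hj] at this
  linarith [dist_triangle (x (gridInterp n t s)) (x (t ⌊(n : ℝ) * s⌋₊)) (gridStep n q s),
    dist_gridInterp_le hn hmono hosc (by positivity) hs]
end

section
/- Suppose W is a [0,∞]-valued random variable such that for every τ > 0 the conditional distributions of (1/τ)·u_n⁻¹(‖X‖) given the event {‖X‖ > u_n(τ)} converge weakly, as n → ∞, to the law of W. Then W is uniformly distributed on [0,1]; in particular P(W < v) = v for every v ∈ [0,1]. -/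
/-! Take `τ = 1`. Since `u_n` is nonincreasing and left-continuous,
`u_n⁻¹(z) < s ↔ u_n(s) < z` for `s > 0`, so the conditional law of `u_n⁻¹(‖X‖)` given
`{‖X‖ > u_n(1)}` gives `[0, s)` the mass `μ(‖X‖ > u_n(s)) / μ(‖X‖ > u_n(1))`, which tends to
`s / 1` by the tail assumption. The portmanteau theorem passes this to the limit:
the open set `[0, v)` gives `P(W < v) ≤ v`, and the closed sets `[0, s]`, `s < v`, give
`P(W < v) ≥ P(W ≤ s) ≥ s`. -/

open MeasureTheory Set Filter Topology ProbabilityTheory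

/-- The generalized inverse `u⁻¹(z) = sup{ τ > 0 : z ≤ u(τ) }`, taken in `[0,∞]`
(so that `sup ∅ = 0`). -/
noncomputable def geninv (u : ℝ → ℝ) (z : ℝ) : ENNReal :=
  sSup {w : ENNReal | ∃ τ : ℝ, 0 < τ ∧ z ≤ u τ ∧ w = ENNReal.ofReal τ}

open scoped ENNReal BoundedContinuousFunction

lemma ofReal_le_geninv_iff {u : ℝ → ℝ} (hu : AntitoneOn u (Ioi 0))
    (hlc : ∀ τ > (0 : ℝ), Tendsto u (𝓝[Ioo 0 τ] τ) (𝓝 (u τ))) (z : ℝ) {s : ℝ} (hs : 0 < s) :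
    ENNReal.ofReal s ≤ geninv u z ↔ z ≤ u s := by
  refine ⟨fun h ↦ ?_, fun h ↦ le_sSup ⟨s, hs, h, rfl⟩⟩
  have : (𝓝[Ioo 0 s] s).NeBot :=
    mem_closure_iff_nhdsWithin_neBot.mp (by simp [closure_Ioo hs.ne, hs.le])
  refine ge_of_tendsto (hlc s hs) ?_
  filter_upwards [self_mem_nhdsWithin] with r ⟨hr, hrs⟩
  obtain ⟨_, ⟨τ, hτ, hzτ, rfl⟩, hrτ⟩ :=
    lt_sSup_iff.mp (((ENNReal.ofReal_lt_ofReal_iff hs).mpr hrs).trans_le h)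
  exact hzτ.trans (hu hr hτ ((ENNReal.ofReal_lt_ofReal_iff hτ).mp hrτ).le)

lemma geninv_lt_ofReal_iff {u : ℝ → ℝ} (hu : AntitoneOn u (Ioi 0))
    (hlc : ∀ τ > (0 : ℝ), Tendsto u (𝓝[Ioo 0 τ] τ) (𝓝 (u τ))) (z : ℝ) {s : ℝ} (hs : 0 < s) :
    geninv u z < ENNReal.ofReal s ↔ u s < z := by
  simpa only [not_le] using (ofReal_le_geninv_iff hu hlc z hs).not

section Portmanteau

variable {α ι : Type*} [MeasurableSpace α] [TopologicalSpace α] [OpensMeasurableSpace α]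
  {L : Filter ι} {ν : Measure α} [IsProbabilityMeasure ν] {νs : ι → Measure α}

lemma exists_tendsto_probabilityMeasure_of_tendsto_integral
    (hprob : ∀ᶠ i in L, IsProbabilityMeasure (νs i))
    (hlim : ∀ f : α →ᵇ ℝ, Tendsto (fun i ↦ ∫ x, f x ∂νs i) L (𝓝 (∫ x, f x ∂ν))) :
    ∃ νs' : ι → ProbabilityMeasure α, (∀ᶠ i in L, (νs' i : Measure α) = νs i) ∧
      Tendsto νs' L (𝓝 ⟨ν, inferInstance⟩) := by
  classical
  let νs' : ι → ProbabilityMeasure α := fun i ↦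
    if h : IsProbabilityMeasure (νs i) then ⟨νs i, h⟩ else ⟨ν, inferInstance⟩
  have hνs' : ∀ᶠ i in L, (νs' i : Measure α) = νs i :=
    hprob.mono fun i h ↦ by simp [νs', h]
  refine ⟨νs', hνs', ProbabilityMeasure.tendsto_iff_forall_integral_tendsto.mpr fun f ↦ ?_⟩
  exact (hlim f).congr' (hνs'.mono fun i h ↦ by simp only [h])

variable [HasOuterApproxClosed α] [L.NeBot]

lemma le_measure_closure_of_tendsto_integral
    (hprob : ∀ᶠ i in L, IsProbabilityMeasure (νs i))
    (hlim : ∀ f : α →ᵇ ℝ, Tendsto (fun i ↦ ∫ x, f x ∂νs i) L (𝓝 (∫ x, f x ∂ν)))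
    {T : Set α} {c : ℝ≥0∞}
    (hT : Tendsto (fun i ↦ νs i T) L (𝓝 c)) : c ≤ ν (closure T) := by
  obtain ⟨νs', hνs', hconv⟩ := exists_tendsto_probabilityMeasure_of_tendsto_integral hprob hlim
  calc c = L.liminf (fun i ↦ (νs' i : Measure α) T) := by
        rw [liminf_congr (hνs'.mono fun i h ↦ by rw [h]), hT.liminf_eq]
    _ ≤ L.limsup (fun i ↦ (νs' i : Measure α) (closure T)) :=
        (liminf_le_liminf <| .of_forall fun i ↦ measure_mono subset_closure).trans
          liminf_le_limsup
    _ ≤ ν (closure T) :=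
        ProbabilityMeasure.limsup_measure_closed_le_of_tendsto hconv isClosed_closure

lemma measure_interior_le_of_tendsto_integral
    (hprob : ∀ᶠ i in L, IsProbabilityMeasure (νs i))
    (hlim : ∀ f : α →ᵇ ℝ, Tendsto (fun i ↦ ∫ x, f x ∂νs i) L (𝓝 (∫ x, f x ∂ν)))
    {T : Set α} {c : ℝ≥0∞}
    (hT : Tendsto (fun i ↦ νs i T) L (𝓝 c)) : ν (interior T) ≤ c := by
  obtain ⟨νs', hνs', hconv⟩ := exists_tendsto_probabilityMeasure_of_tendsto_integral hprob hlim
  calc ν (interior T) ≤ L.liminf (fun i ↦ (νs' i : Measure α) (interior T)) :=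
        ProbabilityMeasure.le_liminf_measure_open_of_tendsto hconv isOpen_interior
    _ ≤ L.liminf (fun i ↦ (νs' i : Measure α) T) :=
        liminf_le_liminf <| .of_forall fun i ↦ measure_mono interior_subset
    _ = c := by rw [liminf_congr (hνs'.mono fun i h ↦ by rw [h]), hT.liminf_eq]

end Portmanteau

lemma measure_Iio_ofReal_eq_of_tendsto_integral {ι : Type*} {L : Filter ι} [L.NeBot]
    {ν : Measure ℝ≥0∞} [IsProbabilityMeasure ν] {νs : ι → Measure ℝ≥0∞}
    (hprob : ∀ᶠ i in L, IsProbabilityMeasure (νs i))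
    (hlim : ∀ f : ℝ≥0∞ →ᵇ ℝ, Tendsto (fun i ↦ ∫ x, f x ∂νs i) L (𝓝 (∫ x, f x ∂ν)))
    (hcdf : ∀ s ∈ Ioc (0 : ℝ) 1,
      Tendsto (fun i ↦ νs i (Iio (ENNReal.ofReal s))) L (𝓝 (ENNReal.ofReal s)))
    {v : ℝ} (hv : v ∈ Icc (0 : ℝ) 1) :
    ν (Iio (ENNReal.ofReal v)) = ENNReal.ofReal v := by
  rcases hv.1.eq_or_lt with rfl | hv0
  · simp
  refine le_antisymm ?_ (le_of_forall_lt_imp_le_of_dense fun c hc ↦ ?_)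
  · simpa only [interior_Iio] using
      measure_interior_le_of_tendsto_integral hprob hlim (hcdf v ⟨hv0, hv.2⟩)
  obtain ⟨s, hs0, rfl⟩ : ∃ s ≥ (0 : ℝ), c = ENNReal.ofReal s :=
    ⟨c.toReal, ENNReal.toReal_nonneg, (ENNReal.ofReal_toReal (ne_top_of_lt hc)).symm⟩
  rcases hs0.eq_or_lt with rfl | hs0
  · simp
  have hsv : s < v := (ENNReal.ofReal_lt_ofReal_iff hv0).mp hc
  calc ENNReal.ofReal s ≤ ν (closure (Iio (ENNReal.ofReal s))) :=
        le_measure_closure_of_tendsto_integral hprob hlim (hcdf s ⟨hs0, hsv.le.trans hv.2⟩)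
    _ ≤ ν (Iio (ENNReal.ofReal v)) :=
        measure_mono <| (closure_minimal Iio_subset_Iic_self isClosed_Iic).trans
          (Iic_subset_Iio.mpr hc)

section TailRatio

variable {Ω : Type*} [MeasurableSpace Ω] {μ : Measure Ω} {A B : ℕ → Set Ω} {a b : ℝ}

lemma eventually_measure_ne_zero_of_tendsto_mul
    (hA : Tendsto (fun n : ℕ ↦ n * (μ (A n)).toReal) atTop (𝓝 a)) (ha : a ≠ 0) :
    ∀ᶠ n in atTop, μ (A n) ≠ 0 :=
  (hA.eventually_ne ha).mono fun n hn h0 ↦ hn (by simp [h0])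

lemma tendsto_cond_of_tendsto_mul [IsFiniteMeasure μ] (hAm : ∀ n, MeasurableSet (A n))
    (hBA : ∀ n, B n ⊆ A n) (ha : a ≠ 0)
    (hA : Tendsto (fun n : ℕ ↦ n * (μ (A n)).toReal) atTop (𝓝 a))
    (hB : Tendsto (fun n : ℕ ↦ n * (μ (B n)).toReal) atTop (𝓝 b)) :
    Tendsto (fun n ↦ μ[B n | A n]) atTop (𝓝 (ENNReal.ofReal (b / a))) := by
  have hratio : Tendsto (fun n ↦ (μ[B n | A n]).toReal) atTop (𝓝 (b / a)) := by
    refine (hB.div hA ha).congr' ?_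
    filter_upwards [eventually_ne_atTop 0] with n hn
    rw [Pi.div_apply, cond_apply (hAm n), inter_eq_self_of_subset_right (hBA n),
      ENNReal.toReal_mul, ENNReal.toReal_inv,
      mul_div_mul_left _ _ (Nat.cast_ne_zero.mpr hn : (n : ℝ) ≠ 0), inv_mul_eq_div]
  simpa only [ENNReal.ofReal_toReal (measure_ne_top _ _)] using ENNReal.tendsto_ofReal hratio

end TailRatio

lemma tendsto_map_geninv_cond_Iio {Ω : Type*} [MeasurableSpace Ω] {μ : Measure Ω}
    [IsFiniteMeasure μ] {u : ℕ → ℝ → ℝ} {Z : Ω → ℝ} (hmono : ∀ n, AntitoneOn (u n) (Ioi 0))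
    (hlc : ∀ n, ∀ τ > (0 : ℝ), Tendsto (u n) (𝓝[Ioo 0 τ] τ) (𝓝 (u n τ)))
    (htail : ∀ τ > (0 : ℝ), Tendsto (fun n : ℕ ↦ n * (μ {ω | u n τ < Z ω}).toReal) atTop (𝓝 τ))
    (hZ : ∀ n, Measurable fun ω ↦ geninv (u n) (Z ω)) {s : ℝ} (hs : s ∈ Ioc (0 : ℝ) 1) :
    Tendsto (fun n ↦ Measure.map (fun ω ↦ geninv (u n) (Z ω)) (μ[|{ω | u n 1 < Z ω}])
      (Iio (ENNReal.ofReal s))) atTop (𝓝 (ENNReal.ofReal s)) := by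
  have hpre : ∀ n, ∀ t > (0 : ℝ),
      (fun ω ↦ geninv (u n) (Z ω)) ⁻¹' Iio (ENNReal.ofReal t) = {ω | u n t < Z ω} :=
    fun n t ht ↦ by ext ω; simp [geninv_lt_ofReal_iff (hmono n) (hlc n) _ ht]
  have hA : ∀ n, MeasurableSet {ω | u n 1 < Z ω} :=
    fun n ↦ hpre n 1 one_pos ▸ hZ n measurableSet_Iio
  have hBA : ∀ n, {ω | u n s < Z ω} ⊆ {ω | u n 1 < Z ω} :=
    fun n ω hω ↦ (hmono n hs.1 (mem_Ioi.mpr one_pos) hs.2).trans_lt hω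
  simpa only [Measure.map_apply (hZ _) measurableSet_Iio, hpre _ s hs.1, div_one] using
    tendsto_cond_of_tendsto_mul hA hBA one_ne_zero (htail 1 one_pos) (htail s hs.1)

theorem stmt17_general {Ω Ω' : Type*} [MeasurableSpace Ω] [MeasurableSpace Ω']
    (μ : Measure Ω) [IsProbabilityMeasure μ] (P : Measure Ω') [IsProbabilityMeasure P]
    {d : ℕ} (X : Ω → EuclideanSpace ℝ (Fin d))
    (u : ℕ → ℝ → ℝ)
    (hmono : ∀ n, AntitoneOn (u n) (Set.Ioi 0))
    (hlc : ∀ n, ∀ τ > (0 : ℝ), Tendsto (u n) (nhdsWithin τ (Set.Ioo 0 τ)) (nhds (u n τ)))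
    (htail : ∀ τ > (0 : ℝ),
      Tendsto (fun n : ℕ => (n : ℝ) * (μ {ω | u n τ < ‖X ω‖}).toReal) atTop (nhds τ))
    (W : Ω' → ENNReal) (hW : Measurable W)
    (hmeas : ∀ (n : ℕ) (τ : ℝ),
      Measurable (fun ω => ENNReal.ofReal τ⁻¹ * geninv (u n) ‖X ω‖))
    (hweak : ∀ τ > (0 : ℝ), ∀ f : ENNReal → ℝ, Continuous f →
      Tendsto (fun n : ℕ =>
          ∫ z, f z ∂(Measure.map (fun ω => ENNReal.ofReal τ⁻¹ * geninv (u n) ‖X ω‖)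
            (μ[|{ω | u n τ < ‖X ω‖}])))
        atTop (nhds (∫ ω', f (W ω') ∂P))) :
    ∀ v ∈ Set.Icc (0 : ℝ) 1, (P {ω' | W ω' < ENNReal.ofReal v}).toReal = v := by
  intro v hv
  have hgm : ∀ n, Measurable fun ω ↦ geninv (u n) ‖X ω‖ := by simpa using (hmeas · 1)
  set ν : ℕ → Measure ℝ≥0∞ :=
    fun n ↦ Measure.map (fun ω ↦ geninv (u n) ‖X ω‖) (μ[|{ω | u n 1 < ‖X ω‖}])
  have hprob : ∀ᶠ n in atTop, IsProbabilityMeasure (ν n) :=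
    (eventually_measure_ne_zero_of_tendsto_mul (htail 1 one_pos) one_ne_zero).mono fun n h ↦
      have := cond_isProbabilityMeasure h
      Measure.isProbabilityMeasure_map (hgm n).aemeasurable
  have hlim : ∀ f : ℝ≥0∞ →ᵇ ℝ,
      Tendsto (fun n ↦ ∫ x, f x ∂ν n) atTop (𝓝 (∫ x, f x ∂P.map W)) := fun f ↦ by
    rw [integral_map hW.aemeasurable f.continuous.aestronglyMeasurable]
    simpa using hweak 1 one_pos f f.continuous
  have hcdf := fun s (hs : s ∈ Ioc (0 : ℝ) 1) ↦ tendsto_map_geninv_cond_Iio hmono hlc htail hgm hs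
  have := Measure.isProbabilityMeasure_map (μ := P) hW.aemeasurable
  have hW_cdf := measure_Iio_ofReal_eq_of_tendsto_integral hprob hlim hcdf hv
  rw [Measure.map_apply hW measurableSet_Iio] at hW_cdf
  exact (congrArg ENNReal.toReal hW_cdf).trans (ENNReal.toReal_ofReal hv.1)

/-- Suppose `n·μ(‖X‖ > u_n(τ)) → τ` for every `τ > 0`, and suppose `W` is a
`[0,∞]`-valued random variable such that for every `τ > 0` the conditional distributions
of `(1/τ)·u_n⁻¹(‖X‖)` given `{‖X‖ > u_n(τ)}` converge weakly to the law of `W`.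
Then `W` is uniformly distributed on `[0,1]`: `P(W < v) = v` for every `v ∈ [0,1]`. -/
theorem stmt17 {Ω Ω' : Type*} [MeasurableSpace Ω] [MeasurableSpace Ω']
    (μ : Measure Ω) [IsProbabilityMeasure μ] (P : Measure Ω') [IsProbabilityMeasure P]
    {d : ℕ} (X : Ω → EuclideanSpace ℝ (Fin d)) (hX : Measurable X)
    (u : ℕ → ℝ → ℝ)
    (hmono : ∀ n, AntitoneOn (u n) (Set.Ioi 0))
    (hupos : ∀ n, ∀ τ > (0 : ℝ), 0 < u n τ)
    (hlc : ∀ n, ∀ τ > (0 : ℝ), Tendsto (u n) (nhdsWithin τ (Set.Ioo 0 τ)) (nhds (u n τ)))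
    (htail : ∀ τ > (0 : ℝ),
      Tendsto (fun n : ℕ => (n : ℝ) * (μ {ω | u n τ < ‖X ω‖}).toReal) atTop (nhds τ))
    (W : Ω' → ENNReal) (hW : Measurable W)
    (hmeas : ∀ (n : ℕ) (τ : ℝ),
      Measurable (fun ω => ENNReal.ofReal τ⁻¹ * geninv (u n) ‖X ω‖))
    (hweak : ∀ τ > (0 : ℝ), ∀ f : ENNReal → ℝ, Continuous f →
      Tendsto (fun n : ℕ =>
          ∫ z, f z ∂(Measure.map (fun ω => ENNReal.ofReal τ⁻¹ * geninv (u n) ‖X ω‖)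
            (μ[|{ω | u n τ < ‖X ω‖}])))
        atTop (nhds (∫ ω', f (W ω') ∂P))) :
    ∀ v ∈ Set.Icc (0 : ℝ) 1, (P {ω' | W ω' < ENNReal.ofReal v}).toReal = v :=
  stmt17_general μ P X u hmono hlc htail W hW hmeas hweak
end
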